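/- arXiv:2511.02297 — 5 statements merged into one kernel-verified Lean document; each statement's English description precedes it below -/
import Mathlib

section
/- One-shot converse bound for soft covering with i.i.d. random codes: let P_X be a probability distribution on 𝒳, P_{Y|X} a channel from 𝒳 to 𝒴, P_XY(x,y) := P_X(x)·P_{Y|X}(y|x), and P_Y the output marginal. Let M ≥ 1 and let C = (X(1),…,X(M)) consist of M i.i.d. random variables, each distributed according to P_X. Define, for β ∈ (0,∞) with β ≠ 1, 𝖣_β(P_XY, C) := (1/(β−1)) · log E_C[ Σ_{y: P_Y(y)>0} ( Σ_{m=1}^M (1/M) P_{Y|X}(y|X(m)) )^β · P_Y(y)^{1−β} ]. Then: (1) for β ∈ (0,1) and every α ∈ [β,1), 𝖣_β(P_XY, C) ≥ (β(1−α)/(α(1−β))) · ( Ĩ_{α,β}(X:Y)_{P_XY} − log M ) and 𝖣_β(P_XY, C) ≥ 0; (2) for β ∈ (1,∞), 𝖣_β(P_XY, C) ≥ max{ I_β(X:Y)_{P_XY} − log M, 0 }, where I_β(X:Y)_{P_XY} := (1/(β−1)) · log( Σ_{(x,y): P_XY(x,y)>0} P_XY(x,y)^β (P_X(x)P_Y(y))^{1−β}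 ). -/
/-!
Write `q_C(y) = (1/M) ∑ₘ W(y | X(m))` for the output distribution induced by the code, so that
`E_C[q_C(y)] = P_Y(y)`. All three quantities in the statement are `log` of sums
`∑_{P_Y(y) > 0} g(y) P_Y(y)^{1-β}`: for `𝖣_β` with `g = E_C[q_C^β]`, for `Ĩ_{α,β}` with
`g = (∑ₓ P_X(x) W(y|x)^α)^{β/α}` and for `I_β` with `g = ∑ₓ P_X(x) W(y|x)^β`. It suffices to
compare the `g`s pointwise in `y`. Jensen for `t ↦ t^β` compares `E_C[q_C^β]` with `P_Y^β`, which
gives the signs of `𝖣_β`. For the bounds involving `M`, `(∑ₘ aₘ)^γ` is sub- or superadditive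
according as `γ ≤ 1` or `γ ≥ 1`, and the codewords are identically distributed, so `E_C[q_C^γ]` is
compared with `M^{1-γ} ∑ₓ P_X(x) W(y|x)^γ`; for `β ≤ α < 1` one first passes from
`q^β = (q^α)^{β/α}` to `q^α` by Jensen for the concave `t ↦ t^{β/α}`.
-/

open scoped BigOperators

noncomputable section

variable {𝓧 𝓨 : Type*} [Fintype 𝓧] [Fintype 𝓨]

/-- Marginal distribution of the first component. -/
def pX (P : 𝓧 × 𝓨 → ℝ) (x : 𝓧) : ℝ := ∑ y, P (x, y)

/-- Marginal distribution of the second component. -/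
def pY (P : 𝓧 × 𝓨 → ℝ) (y : 𝓨) : ℝ := ∑ x, P (x, y)

/-- Conditional distribution `P_{X|Y}(x|y)`. -/
def pCond (P : 𝓧 × 𝓨 → ℝ) (x : 𝓧) (y : 𝓨) : ℝ := P (x, y) / pY P y

/-- Two-parameter Rényi mutual information `Ĩ_{α,β}(X:Y)`. -/
def Itilde (P : 𝓧 × 𝓨 → ℝ) (α β : ℝ) : ℝ :=
  α / (β * (α - 1)) *
    Real.logb 2 (∑ y, if 0 < pY P y then
      pY P y *
        (∑ x, if 0 < pX P x then pX P x ^ (1 - α) * pCond P x y ^ α else 0) ^ (β / α)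
      else 0)

/-- Rényi mutual information `I_β(X:Y) = D_β(P_XY‖P_X×P_Y)`. -/
def Irenyi (P : 𝓧 × 𝓨 → ℝ) (β : ℝ) : ℝ :=
  1 / (β - 1) *
    Real.logb 2 (∑ p, if 0 < P p then
      P p ^ β * (pX P p.1 * pY P p.2) ^ (1 - β) else 0)

/-- Joint distribution induced by an input distribution and a channel. -/
def pXY (PX : 𝓧 → ℝ) (W : 𝓧 → 𝓨 → ℝ) : 𝓧 × 𝓨 → ℝ :=
  fun p => PX p.1 * W p.1 p.2

/-- The soft-covering Rényi divergence `𝖣_β(P_XY, C)` for an i.i.d. random code of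
`M` codewords drawn from `PX` (defined for `β ≠ 1`): the expectation is over the
`M`-fold product distribution of the code. -/
def softCoveringDiv (PX : 𝓧 → ℝ) (W : 𝓧 → 𝓨 → ℝ) (M : ℕ) (β : ℝ) : ℝ :=
  1 / (β - 1) *
    Real.logb 2 (∑ c : Fin M → 𝓧, (∏ m, PX (c m)) *
      (∑ y, if 0 < (∑ x, PX x * W x y) then
        (∑ m, (1 / (M : ℝ)) * W (c m) y) ^ β * (∑ x, PX x * W x y) ^ (1 - β)
        else 0))


namespace Real

theorem rpow_sum_le_sum_rpow {ι : Type*} (s : Finset ι) {f : ι → ℝ} (hf : ∀ i ∈ s, 0 ≤ f i)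
    {p : ℝ} (hp0 : 0 < p) (hp1 : p ≤ 1) : (∑ i ∈ s, f i) ^ p ≤ ∑ i ∈ s, f i ^ p :=
  Finset.le_sum_of_subadditive_on_pred (fun x : ℝ => x ^ p) (0 ≤ ·)
    (zero_rpow hp0.ne').le (fun _ _ ha hb => rpow_add_le_add_rpow ha hb hp0.le hp1)
    (fun _ _ => add_nonneg) f hf

theorem sum_rpow_le_rpow_sum {ι : Type*} (s : Finset ι) {f : ι → ℝ} (hf : ∀ i ∈ s, 0 ≤ f i)
    {p : ℝ} (hp : 1 ≤ p) : ∑ i ∈ s, f i ^ p ≤ (∑ i ∈ s, f i) ^ p := by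
  classical
  induction s using Finset.induction_on with
  | empty => simp [zero_rpow (by positivity : p ≠ 0)]
  | insert a s ha ih =>
    rw [Finset.forall_mem_insert] at hf
    rw [Finset.sum_insert ha, Finset.sum_insert ha]
    calc f a ^ p + ∑ i ∈ s, f i ^ p ≤ f a ^ p + (∑ i ∈ s, f i) ^ p := by gcongr; exact ih hf.2
      _ ≤ _ := add_rpow_le_rpow_add hf.1 (Finset.sum_nonneg hf.2) hp

theorem sum_mul_rpow_pos {ι : Type*} {s : Finset ι} {w f : ι → ℝ} (hw : ∀ i ∈ s, 0 ≤ w i)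
    (hf : ∀ i ∈ s, 0 ≤ f i) (h : 0 < ∑ i ∈ s, w i * f i) (p : ℝ) :
    0 < ∑ i ∈ s, w i * f i ^ p := by
  obtain ⟨i, hi, hpos⟩ :=
    (Finset.sum_pos_iff_of_nonneg fun i hi => mul_nonneg (hw i hi) (hf i hi)).1 h
  have hfi : 0 < f i := pos_of_mul_pos_right hpos (hw i hi)
  refine (Finset.sum_pos_iff_of_nonneg fun j hj =>
    mul_nonneg (hw j hj) (rpow_nonneg (hf j hj) p)).2 ⟨i, hi, ?_⟩
  exact mul_pos (pos_of_mul_pos_left hpos hfi.le) (rpow_pos_of_pos hfi p)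

theorem logb_rpow_mul {b x y : ℝ} (hx : 0 < x) (hy : 0 < y) (a : ℝ) :
    logb b (x ^ a * y) = a * logb b x + logb b y := by
  rw [logb_mul (rpow_pos_of_pos hx a).ne' hy.ne', logb_rpow_eq_mul_logb_of_pos hx]

end Real

def iidExpect {ι : Type*} [Fintype ι] [DecidableEq ι] (P : 𝓧 → ℝ) (f : (ι → 𝓧) → ℝ) : ℝ :=
  ∑ c, (∏ i, P (c i)) * f c

section iidExpect

variable {ι : Type*} [Fintype ι] [DecidableEq ι] {P : 𝓧 → ℝ}

theorem sum_prod_apply_eq_one (hPsum : ∑ x, P x = 1) : ∑ c : ι → 𝓧, ∏ i, P (c i) = 1 := by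
  rw [← Fintype.prod_sum fun _ x => P x]
  simp [hPsum]

theorem iidExpect_apply_eval (hPsum : ∑ x, P x = 1) (i : ι) (g : 𝓧 → ℝ) :
    iidExpect P (fun c => g (c i)) = ∑ x, P x * g x := by
  have hsplit : ∀ c : ι → 𝓧, (∏ j, P (c j)) * g (c i)
      = ∏ j, (P (c j) * if j = i then g (c j) else 1) := fun c => by
    rw [Finset.prod_mul_distrib, Finset.prod_ite_eq' Finset.univ i (fun j => g (c j))]
    simp
  have hfactor : ∀ j : ι, (∑ x, P x * if j = i then g x else 1)
      = if j = i then ∑ x, P x * g x else 1 := fun j => by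
    by_cases h : j = i <;> simp [h, hPsum]
  rw [iidExpect, Finset.sum_congr rfl fun c _ => hsplit c,
    ← Fintype.prod_sum (fun j x => P x * if j = i then g x else 1),
    Finset.prod_congr rfl fun j _ => hfactor j, Finset.prod_ite_eq' Finset.univ i]
  simp

theorem iidExpect_sum {κ : Type*} (s : Finset κ) (f : κ → (ι → 𝓧) → ℝ) :
    iidExpect P (fun c => ∑ k ∈ s, f k c) = ∑ k ∈ s, iidExpect P (f k) := by
  simp only [iidExpect, Finset.mul_sum]
  exact Finset.sum_comm

theorem iidExpect_mono (hP : ∀ x, 0 ≤ P x) {f g : (ι → 𝓧) → ℝ} (h : ∀ c, f c ≤ g c) :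
    iidExpect P f ≤ iidExpect P g :=
  Finset.sum_le_sum fun c _ =>
    mul_le_mul_of_nonneg_left (h c) (Finset.prod_nonneg fun i _ => hP (c i))

theorem iidExpect_rpow_le (hP : ∀ x, 0 ≤ P x) (hPsum : ∑ x, P x = 1)
    {f : (ι → 𝓧) → ℝ} (hf : ∀ c, 0 ≤ f c) {p : ℝ} (hp0 : 0 ≤ p) (hp1 : p ≤ 1) :
    iidExpect P (fun c => f c ^ p) ≤ iidExpect P f ^ p := by
  simpa only [iidExpect, smul_eq_mul] using (Real.concaveOn_rpow hp0 hp1).le_map_sum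
    (fun c _ => Finset.prod_nonneg fun i _ => hP (c i)) (sum_prod_apply_eq_one hPsum)
    fun c _ => Set.mem_Ici.2 (hf c)

theorem rpow_iidExpect_le (hP : ∀ x, 0 ≤ P x) (hPsum : ∑ x, P x = 1)
    {f : (ι → 𝓧) → ℝ} (hf : ∀ c, 0 ≤ f c) {p : ℝ} (hp : 1 ≤ p) :
    iidExpect P f ^ p ≤ iidExpect P (fun c => f c ^ p) :=
  Real.rpow_arith_mean_le_arith_mean_rpow _ _ _ (fun c _ => Finset.prod_nonneg fun i _ => hP (c i))
    (sum_prod_apply_eq_one hPsum) (fun c _ => hf c) hp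

theorem iidExpect_rpow_pos (hP : ∀ x, 0 ≤ P x) {f : (ι → 𝓧) → ℝ} (hf : ∀ c, 0 ≤ f c)
    (h : 0 < iidExpect P f) (p : ℝ) : 0 < iidExpect P (fun c => f c ^ p) :=
  Real.sum_mul_rpow_pos (fun c _ => Finset.prod_nonneg fun i _ => hP (c i)) (fun c _ => hf c) h p

end iidExpect

def codeAverage {M : ℕ} (w : 𝓧 → ℝ) (c : Fin M → 𝓧) : ℝ := ∑ m, (1 / (M : ℝ)) * w (c m)

theorem codeAverage_nonneg {X : Type*} {M : ℕ} {w : X → ℝ} (hw : ∀ x, 0 ≤ w x)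
    (c : Fin M → X) : 0 ≤ codeAverage w c :=
  Finset.sum_nonneg fun m _ => mul_nonneg (by positivity) (hw (c m))

section CodeAverage

variable {PX : 𝓧 → ℝ} {M : ℕ} {w : 𝓧 → ℝ}

theorem iidExpect_codeAverage (hPXsum : ∑ x, PX x = 1) (hM : M ≠ 0) :
    iidExpect PX (codeAverage w : (Fin M → 𝓧) → ℝ) = ∑ x, PX x * w x := by
  have hM0 : (M : ℝ) ≠ 0 := Nat.cast_ne_zero.2 hM
  unfold codeAverage
  rw [iidExpect_sum]
  simp only [iidExpect_apply_eval hPXsum (g := fun x => 1 / (M : ℝ) * w x)]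
  simp only [Finset.sum_const, Finset.card_univ, Fintype.card_fin, nsmul_eq_mul]
  rw [Finset.mul_sum]
  exact Finset.sum_congr rfl fun x _ => by field_simp

theorem iidExpect_sum_rpow (hPXsum : ∑ x, PX x = 1) (hw : ∀ x, 0 ≤ w x) (hM : M ≠ 0) (γ : ℝ) :
    iidExpect PX (fun c : Fin M → 𝓧 => ∑ m, ((1 / (M : ℝ)) * w (c m)) ^ γ)
      = (M : ℝ) ^ (1 - γ) * ∑ x, PX x * w x ^ γ := by
  have hM0 : (0 : ℝ) < M := by positivity
  rw [iidExpect_sum]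
  simp only [iidExpect_apply_eval hPXsum (g := fun x => (1 / (M : ℝ) * w x) ^ γ)]
  have hscale : ∀ x, ((1 / (M : ℝ)) * w x) ^ γ = ((M : ℝ) ^ γ)⁻¹ * w x ^ γ := fun x => by
    rw [Real.mul_rpow (by positivity) (hw x), one_div, Real.inv_rpow hM0.le]
  simp only [hscale, mul_left_comm _ ((M : ℝ) ^ γ)⁻¹, ← Finset.mul_sum]
  simp only [Finset.sum_const, Finset.card_univ, Fintype.card_fin, nsmul_eq_mul,
    Real.rpow_sub hM0, Real.rpow_one]
  field_simp

variable (hPX : ∀ x, 0 ≤ PX x) (hPXsum : ∑ x, PX x = 1) (hw : ∀ x, 0 ≤ w x) (hM : M ≠ 0)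
include hPX hPXsum hw hM

theorem iidExpect_codeAverage_rpow_le {β : ℝ} (hβ0 : 0 ≤ β) (hβ1 : β ≤ 1) :
    iidExpect PX (fun c : Fin M → 𝓧 => codeAverage w c ^ β) ≤ (∑ x, PX x * w x) ^ β := by
  rw [← iidExpect_codeAverage hPXsum hM]
  exact iidExpect_rpow_le hPX hPXsum (codeAverage_nonneg hw) hβ0 hβ1

theorem rpow_le_iidExpect_codeAverage_rpow {β : ℝ} (hβ : 1 ≤ β) :
    (∑ x, PX x * w x) ^ β ≤ iidExpect PX (fun c : Fin M → 𝓧 => codeAverage w c ^ β) := by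
  rw [← iidExpect_codeAverage hPXsum hM]
  exact rpow_iidExpect_le hPX hPXsum (codeAverage_nonneg hw) hβ

theorem iidExpect_codeAverage_rpow_le_mul {γ : ℝ} (hγ0 : 0 < γ) (hγ1 : γ ≤ 1) :
    iidExpect PX (fun c : Fin M → 𝓧 => codeAverage w c ^ γ)
      ≤ (M : ℝ) ^ (1 - γ) * ∑ x, PX x * w x ^ γ := by
  rw [← iidExpect_sum_rpow hPXsum hw hM]
  exact iidExpect_mono hPX fun c => Real.rpow_sum_le_sum_rpow _
    (fun m _ => mul_nonneg (by positivity) (hw (c m))) hγ0 hγ1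

theorem mul_le_iidExpect_codeAverage_rpow {γ : ℝ} (hγ : 1 ≤ γ) :
    (M : ℝ) ^ (1 - γ) * ∑ x, PX x * w x ^ γ
      ≤ iidExpect PX (fun c : Fin M → 𝓧 => codeAverage w c ^ γ) := by
  rw [← iidExpect_sum_rpow hPXsum hw hM]
  exact iidExpect_mono hPX fun c => Real.sum_rpow_le_rpow_sum _
    (fun m _ => mul_nonneg (by positivity) (hw (c m))) hγ

theorem iidExpect_codeAverage_rpow_le_mul_rpow {α β : ℝ} (hβ : 0 < β) (hβα : β ≤ α)
    (hα : α ≤ 1) :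
    iidExpect PX (fun c : Fin M → 𝓧 => codeAverage w c ^ β)
      ≤ (M : ℝ) ^ ((1 - α) * (β / α)) * (∑ x, PX x * w x ^ α) ^ (β / α) := by
  have hα0 : 0 < α := hβ.trans_le hβα
  have hexp : 0 ≤ β / α := by positivity
  have hpow : ∀ c : Fin M → 𝓧, 0 ≤ codeAverage w c ^ α := fun c =>
    Real.rpow_nonneg (codeAverage_nonneg hw c) α
  calc iidExpect PX (fun c : Fin M → 𝓧 => codeAverage w c ^ β)
      = iidExpect PX (fun c : Fin M → 𝓧 => (codeAverage w c ^ α) ^ (β / α)) := by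
        simp only [← Real.rpow_mul (codeAverage_nonneg hw _), mul_div_cancel₀ _ hα0.ne']
    _ ≤ iidExpect PX (fun c : Fin M → 𝓧 => codeAverage w c ^ α) ^ (β / α) :=
        iidExpect_rpow_le hPX hPXsum hpow hexp ((div_le_one hα0).2 hβα)
    _ ≤ ((M : ℝ) ^ (1 - α) * ∑ x, PX x * w x ^ α) ^ (β / α) :=
        Real.rpow_le_rpow (Finset.sum_nonneg fun c _ =>
            mul_nonneg (Finset.prod_nonneg fun i _ => hPX (c i)) (hpow c))
          (iidExpect_codeAverage_rpow_le_mul hPX hPXsum hw hM hα0 hα) hexp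
    _ = (M : ℝ) ^ ((1 - α) * (β / α)) * (∑ x, PX x * w x ^ α) ^ (β / α) := by
        rw [Real.mul_rpow (by positivity) (Finset.sum_nonneg fun x _ =>
          mul_nonneg (hPX x) (Real.rpow_nonneg (hw x) α)), ← Real.rpow_mul (by positivity)]

theorem iidExpect_codeAverage_rpow_pos (h : 0 < ∑ x, PX x * w x) (β : ℝ) :
    0 < iidExpect PX (fun c : Fin M → 𝓧 => codeAverage w c ^ β) :=
  iidExpect_rpow_pos hPX (codeAverage_nonneg hw)
    ((iidExpect_codeAverage hPXsum hM).symm ▸ h) β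

end CodeAverage

def tiltedSum (Q : 𝓨 → ℝ) (β : ℝ) (g : 𝓨 → ℝ) : ℝ :=
  ∑ y, if 0 < Q y then g y * Q y ^ (1 - β) else 0

section TiltedSum

variable {Q : 𝓨 → ℝ} {β : ℝ} {g g' : 𝓨 → ℝ}

theorem tiltedSum_mono (h : ∀ y, 0 < Q y → g y ≤ g' y) : tiltedSum Q β g ≤ tiltedSum Q β g' :=
  Finset.sum_le_sum fun y _ => by
    split_ifs with hy
    · exact mul_le_mul_of_nonneg_right (h y hy) (Real.rpow_nonneg hy.le _)
    · exact le_rfl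

theorem tiltedSum_const_mul (a : ℝ) :
    tiltedSum Q β (fun y => a * g y) = a * tiltedSum Q β g := by
  simp only [tiltedSum, Finset.mul_sum, mul_ite, mul_zero, mul_assoc]

theorem tiltedSum_rpow_self (hQ : ∀ y, 0 ≤ Q y) (hQsum : ∑ y, Q y = 1) :
    tiltedSum Q β (fun y => Q y ^ β) = 1 := by
  rw [← hQsum]
  refine Finset.sum_congr rfl fun y _ => ?_
  split_ifs with hy
  · rw [← Real.rpow_add hy, add_sub_cancel, Real.rpow_one]
  · exact (hQ y).antisymm (not_lt.1 hy)

theorem tiltedSum_pos (hQsum : ∑ y, Q y = 1) (hg : ∀ y, 0 < Q y → 0 < g y) :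
    0 < tiltedSum Q β g := by
  obtain ⟨y, -, hy : 0 < Q y⟩ := Finset.exists_lt_of_sum_lt (s := Finset.univ)
    (f := fun _ => 0) (g := Q) (by simp [hQsum])
  refine (Finset.sum_pos_iff_of_nonneg fun z _ => ?_).2 ⟨y, Finset.mem_univ y, ?_⟩
  · split_ifs with hz
    · exact mul_nonneg (hg z hz).le (Real.rpow_nonneg hz.le _)
    · exact le_rfl
  · rw [if_pos hy]
    exact mul_pos (hg y hy) (Real.rpow_pos_of_pos hy _)

end TiltedSum

def outputDist (PX : 𝓧 → ℝ) (W : 𝓧 → 𝓨 → ℝ) (y : 𝓨) : ℝ := ∑ x, PX x * W x y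

def softCoveringMoment (PX : 𝓧 → ℝ) (W : 𝓧 → 𝓨 → ℝ) (M : ℕ) (β : ℝ) : ℝ :=
  tiltedSum (outputDist PX W) β fun y =>
    iidExpect PX fun c : Fin M → 𝓧 => codeAverage (W · y) c ^ β

section SoftCovering

variable {PX : 𝓧 → ℝ} {W : 𝓧 → 𝓨 → ℝ}

theorem sum_outputDist (hPXsum : ∑ x, PX x = 1) (hWsum : ∀ x, ∑ y, W x y = 1) :
    ∑ y, outputDist PX W y = 1 := by
  simp only [outputDist]
  rw [Finset.sum_comm]
  simp [← Finset.mul_sum, hWsum, hPXsum]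

theorem tiltedSum_rpow_outputDist (hPX : ∀ x, 0 ≤ PX x) (hPXsum : ∑ x, PX x = 1)
    (hW : ∀ x y, 0 ≤ W x y) (hWsum : ∀ x, ∑ y, W x y = 1) (β : ℝ) :
    tiltedSum (outputDist PX W) β (fun y => outputDist PX W y ^ β) = 1 :=
  tiltedSum_rpow_self (fun y => Finset.sum_nonneg fun x _ => mul_nonneg (hPX x) (hW x y))
    (sum_outputDist hPXsum hWsum)

theorem softCoveringDiv_eq (M : ℕ) (β : ℝ) :
    softCoveringDiv PX W M β = 1 / (β - 1) * Real.logb 2 (softCoveringMoment PX W M β) := by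
  unfold softCoveringDiv softCoveringMoment tiltedSum iidExpect outputDist codeAverage
  congr 2
  simp only [Finset.mul_sum, mul_ite, mul_zero]
  rw [Finset.sum_comm]
  refine Finset.sum_congr rfl fun y _ => ?_
  split_ifs
  · rw [Finset.sum_mul]
    exact Finset.sum_congr rfl fun c _ => (mul_assoc _ _ _).symm
  · simp

theorem Itilde_pXY (hPX : ∀ x, 0 ≤ PX x) (hW : ∀ x y, 0 ≤ W x y)
    (hWsum : ∀ x, ∑ y, W x y = 1) {α : ℝ} (hα : α ≠ 0) (β : ℝ) :
    Itilde (pXY PX W) α β = α / (β * (α - 1)) * Real.logb 2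
      (tiltedSum (outputDist PX W) β fun y => (∑ x, PX x * W x y ^ α) ^ (β / α)) := by
  have hpX : pX (pXY PX W) = PX := funext fun x => by
    simp only [pX, pXY, ← Finset.mul_sum, hWsum, mul_one]
  have hpY : pY (pXY PX W) = outputDist PX W := rfl
  unfold Itilde tiltedSum
  rw [hpY]
  congr 2
  refine Finset.sum_congr rfl fun y _ => ?_
  split_ifs with hy
  · have hinner : (∑ x, if 0 < pX (pXY PX W) x then
        pX (pXY PX W) x ^ (1 - α) * pCond (pXY PX W) x y ^ α else 0)
        = (∑ x, PX x * W x y ^ α) * (outputDist PX W y ^ α)⁻¹ := by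
      rw [Finset.sum_mul, hpX]
      refine Finset.sum_congr rfl fun x _ => ?_
      split_ifs with hx
      · change PX x ^ (1 - α) * (PX x * W x y / outputDist PX W y) ^ α = _
        rw [Real.div_rpow (mul_nonneg (hPX x) (hW x y)) hy.le, Real.mul_rpow (hPX x) (hW x y),
          div_eq_mul_inv, ← mul_assoc, ← mul_assoc, ← Real.rpow_add hx, sub_add_cancel,
          Real.rpow_one]
      · simp [((hPX x).antisymm (not_lt.1 hx)).symm]
    rw [hinner, Real.mul_rpow (Finset.sum_nonneg fun x _ =>
        mul_nonneg (hPX x) (Real.rpow_nonneg (hW x y) α)) (by positivity),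
      Real.inv_rpow (by positivity), ← Real.rpow_mul hy.le, mul_div_cancel₀ _ hα,
      Real.rpow_sub hy, Real.rpow_one]
    ring
  · rfl

theorem Irenyi_pXY (hPX : ∀ x, 0 ≤ PX x) (hW : ∀ x y, 0 ≤ W x y)
    (hWsum : ∀ x, ∑ y, W x y = 1) {β : ℝ} (hβ : β ≠ 0) :
    Irenyi (pXY PX W) β = 1 / (β - 1) * Real.logb 2
      (tiltedSum (outputDist PX W) β fun y => ∑ x, PX x * W x y ^ β) := by
  have hpX : pX (pXY PX W) = PX := funext fun x => by
    simp only [pX, pXY, ← Finset.mul_sum, hWsum, mul_one]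
  unfold Irenyi tiltedSum
  congr 2
  rw [Fintype.sum_prod_type, Finset.sum_comm]
  refine Finset.sum_congr rfl fun y _ => ?_
  change ∑ x, (if 0 < PX x * W x y then
    (PX x * W x y) ^ β * (pX (pXY PX W) x * outputDist PX W y) ^ (1 - β) else 0) = _
  rw [hpX]
  split_ifs with hy
  · rw [Finset.sum_mul]
    refine Finset.sum_congr rfl fun x _ => ?_
    split_ifs with hxy
    · have hx : 0 < PX x := pos_of_mul_pos_left hxy (hW x y)
      rw [Real.mul_rpow (hPX x) (hW x y), Real.mul_rpow (hPX x) hy.le, mul_mul_mul_comm,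
        ← Real.rpow_add hx, add_sub_cancel, Real.rpow_one, mul_assoc]
    · rcases mul_eq_zero.1 ((mul_nonneg (hPX x) (hW x y)).antisymm' (not_lt.1 hxy)) with h | h
      · simp [h]
      · simp [h, Real.zero_rpow hβ]
  · have hzero : ∀ x, PX x * W x y = 0 := fun x =>
      (Finset.sum_eq_zero_iff_of_nonneg fun x _ => mul_nonneg (hPX x) (hW x y)).1
        ((Finset.sum_nonneg fun x _ => mul_nonneg (hPX x) (hW x y)).antisymm' (not_lt.1 hy))
        x (Finset.mem_univ x)
    simp [hzero]

end SoftCovering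

section SoftCoveringBounds

variable {PX : 𝓧 → ℝ} {W : 𝓧 → 𝓨 → ℝ} {M : ℕ} {β : ℝ}
variable (hPX : ∀ x, 0 ≤ PX x) (hPXsum : ∑ x, PX x = 1) (hW : ∀ x y, 0 ≤ W x y) (hM : M ≠ 0)
include hPX hPXsum hW hM

theorem softCoveringMoment_pos (hWsum : ∀ x, ∑ y, W x y = 1) : 0 < softCoveringMoment PX W M β :=
  tiltedSum_pos (sum_outputDist hPXsum hWsum) fun y hy =>
    iidExpect_codeAverage_rpow_pos hPX hPXsum (hW · y) hM hy β

theorem softCoveringMoment_le_one (hWsum : ∀ x, ∑ y, W x y = 1) (hβ0 : 0 ≤ β) (hβ1 : β ≤ 1) :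
    softCoveringMoment PX W M β ≤ 1 := by
  rw [← tiltedSum_rpow_outputDist hPX hPXsum hW hWsum β]
  exact tiltedSum_mono fun y _ =>
    iidExpect_codeAverage_rpow_le hPX hPXsum (hW · y) hM hβ0 hβ1

theorem one_le_softCoveringMoment (hWsum : ∀ x, ∑ y, W x y = 1) (hβ : 1 ≤ β) :
    1 ≤ softCoveringMoment PX W M β := by
  rw [← tiltedSum_rpow_outputDist hPX hPXsum hW hWsum β]
  exact tiltedSum_mono fun y _ =>
    rpow_le_iidExpect_codeAverage_rpow hPX hPXsum (hW · y) hM hβ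

theorem softCoveringMoment_le_mul {α : ℝ} (hβ : 0 < β) (hβα : β ≤ α) (hα : α ≤ 1) :
    softCoveringMoment PX W M β ≤ (M : ℝ) ^ ((1 - α) * (β / α)) *
      tiltedSum (outputDist PX W) β fun y => (∑ x, PX x * W x y ^ α) ^ (β / α) := by
  rw [← tiltedSum_const_mul]
  exact tiltedSum_mono fun y _ =>
    iidExpect_codeAverage_rpow_le_mul_rpow hPX hPXsum (hW · y) hM hβ hβα hα

theorem mul_le_softCoveringMoment (hβ : 1 ≤ β) :
    (M : ℝ) ^ (1 - β) * tiltedSum (outputDist PX W) β (fun y => ∑ x, PX x * W x y ^ β)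
      ≤ softCoveringMoment PX W M β := by
  rw [← tiltedSum_const_mul]
  exact tiltedSum_mono fun y _ =>
    mul_le_iidExpect_codeAverage_rpow hPX hPXsum (hW · y) hM hβ

end SoftCoveringBounds

section SoftCoveringDiv

variable {PX : 𝓧 → ℝ} {W : 𝓧 → 𝓨 → ℝ} {M : ℕ} {β : ℝ}
variable (hPX : ∀ x, 0 ≤ PX x) (hPXsum : ∑ x, PX x = 1) (hW : ∀ x y, 0 ≤ W x y)
  (hWsum : ∀ x, ∑ y, W x y = 1) (hM : M ≠ 0)
include hPX hPXsum hW hWsum hM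

theorem softCoveringDiv_nonneg_of_lt_one (hβ0 : 0 ≤ β) (hβ1 : β < 1) :
    0 ≤ softCoveringDiv PX W M β := by
  rw [softCoveringDiv_eq]
  exact mul_nonneg_of_nonpos_of_nonpos (one_div_nonpos.2 (by linarith))
    (Real.logb_nonpos one_lt_two (softCoveringMoment_pos hPX hPXsum hW hM hWsum).le
      (softCoveringMoment_le_one hPX hPXsum hW hM hWsum hβ0 hβ1.le))

theorem softCoveringDiv_nonneg_of_one_lt (hβ : 1 < β) : 0 ≤ softCoveringDiv PX W M β := by
  rw [softCoveringDiv_eq]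
  exact mul_nonneg (one_div_nonneg.2 (by linarith))
    (Real.logb_nonneg one_lt_two (one_le_softCoveringMoment hPX hPXsum hW hM hWsum hβ.le))

theorem Itilde_sub_logb_le_softCoveringDiv {α : ℝ} (hβ : 0 < β) (hβα : β ≤ α) (hα : α < 1) :
    β * (1 - α) / (α * (1 - β)) * (Itilde (pXY PX W) α β - Real.logb 2 M)
      ≤ softCoveringDiv PX W M β := by
  have hα0 : 0 < α := hβ.trans_le hβα
  have hβ1 : β < 1 := hβα.trans_lt hα
  have hM0 : (0 : ℝ) < M := by positivity
  set T := tiltedSum (outputDist PX W) β fun y => (∑ x, PX x * W x y ^ α) ^ (β / α)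
  have hE := softCoveringMoment_pos (β := β) hPX hPXsum hW hM hWsum
  have hbound := softCoveringMoment_le_mul hPX hPXsum hW hM hβ hβα hα.le
  have hT : 0 < T := pos_of_mul_pos_right (hE.trans_le hbound) (by positivity)
  have hlog : Real.logb 2 (softCoveringMoment PX W M β)
      ≤ (1 - α) * (β / α) * Real.logb 2 M + Real.logb 2 T := by
    calc _ ≤ Real.logb 2 ((M : ℝ) ^ ((1 - α) * (β / α)) * T) :=
          Real.logb_le_logb_of_le one_lt_two hE hbound
      _ = _ := Real.logb_rpow_mul hM0 hT _
  rw [softCoveringDiv_eq, Itilde_pXY hPX hW hWsum hα0.ne']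
  -- the prefactors `β(1-α)/(α(1-β))` and `α/(β(α-1))` multiply to `1/(β-1)`
  calc _ = 1 / (β - 1) * ((1 - α) * (β / α) * Real.logb 2 M + Real.logb 2 T) := by
        have : α - 1 ≠ 0 := by linarith
        have : 1 - β ≠ 0 := by linarith
        have : β - 1 ≠ 0 := by linarith
        field_simp
        ring
    _ ≤ _ := mul_le_mul_of_nonpos_left hlog (one_div_nonpos.2 (by linarith))

theorem Irenyi_sub_logb_le_softCoveringDiv (hβ : 1 < β) :
    Irenyi (pXY PX W) β - Real.logb 2 M ≤ softCoveringDiv PX W M β := by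
  have hM0 : (0 : ℝ) < M := by positivity
  set T := tiltedSum (outputDist PX W) β fun y => ∑ x, PX x * W x y ^ β
  have hT : 0 < T := tiltedSum_pos (sum_outputDist hPXsum hWsum) fun y hy =>
    Real.sum_mul_rpow_pos (fun x _ => hPX x) (fun x _ => hW x y) hy β
  have hbound := mul_le_softCoveringMoment hPX hPXsum hW hM hβ.le
  have hlog : (1 - β) * Real.logb 2 M + Real.logb 2 T
      ≤ Real.logb 2 (softCoveringMoment PX W M β) := by
    calc _ = Real.logb 2 ((M : ℝ) ^ (1 - β) * T) := (Real.logb_rpow_mul hM0 hT _).symm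
      _ ≤ _ := Real.logb_le_logb_of_le one_lt_two (by positivity) hbound
  rw [softCoveringDiv_eq, Irenyi_pXY hPX hW hWsum (by linarith)]
  calc _ = 1 / (β - 1) * ((1 - β) * Real.logb 2 M + Real.logb 2 T) := by
        have : β - 1 ≠ 0 := by linarith
        field_simp
        ring
    _ ≤ _ := mul_le_mul_of_nonneg_left hlog (one_div_nonneg.2 (by linarith))

end SoftCoveringDiv

theorem softCovering_one_shot_converse_general
    (PX : 𝓧 → ℝ) (hPX : ∀ x, 0 ≤ PX x) (hPXsum : ∑ x, PX x = 1)
    (W : 𝓧 → 𝓨 → ℝ) (hW : ∀ x y, 0 ≤ W x y) (hWsum : ∀ x, ∑ y, W x y = 1)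
    (M : ℕ) (hM : 1 ≤ M) (β : ℝ) :
    (0 < β → β < 1 → ∀ α : ℝ, β ≤ α → α < 1 →
      softCoveringDiv PX W M β ≥
          β * (1 - α) / (α * (1 - β)) *
            (Itilde (pXY PX W) α β - Real.logb 2 (M : ℝ)) ∧
        0 ≤ softCoveringDiv PX W M β) ∧
    (1 < β →
      softCoveringDiv PX W M β ≥
        max (Irenyi (pXY PX W) β - Real.logb 2 (M : ℝ)) 0) := by
  have hM0 : M ≠ 0 := Nat.one_le_iff_ne_zero.1 hM
  refine ⟨fun hβ0 hβ1 α hβα hα1 => ⟨?_, ?_⟩, fun hβ => max_le ?_ ?_⟩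
  · exact Itilde_sub_logb_le_softCoveringDiv hPX hPXsum hW hWsum hM0 hβ0 hβα hα1
  · exact softCoveringDiv_nonneg_of_lt_one hPX hPXsum hW hWsum hM0 hβ0.le hβ1
  · exact Irenyi_sub_logb_le_softCoveringDiv hPX hPXsum hW hWsum hM0 hβ
  · exact softCoveringDiv_nonneg_of_one_lt hPX hPXsum hW hWsum hM0 hβ

/-- one-shot converse bound for soft covering with i.i.d. random
codes: (1) for `β ∈ (0,1)` and `α ∈ [β,1)`,
`𝖣_β(P_XY, C) ≥ (β(1−α)/(α(1−β)))·(Ĩ_{α,β}(X:Y) − log M)` and `𝖣_β(P_XY, C) ≥ 0`;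
(2) for `β ∈ (1,∞)`, `𝖣_β(P_XY, C) ≥ max(I_β(X:Y) − log M, 0)`. -/
theorem softCovering_one_shot_converse
    [Nonempty 𝓧] [Nonempty 𝓨]
    (PX : 𝓧 → ℝ) (hPX : ∀ x, 0 ≤ PX x) (hPXsum : ∑ x, PX x = 1)
    (W : 𝓧 → 𝓨 → ℝ) (hW : ∀ x y, 0 ≤ W x y) (hWsum : ∀ x, ∑ y, W x y = 1)
    (M : ℕ) (hM : 1 ≤ M) (β : ℝ) :
    (0 < β → β < 1 → ∀ α : ℝ, β ≤ α → α < 1 →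
      softCoveringDiv PX W M β ≥
          β * (1 - α) / (α * (1 - β)) *
            (Itilde (pXY PX W) α β - Real.logb 2 (M : ℝ)) ∧
        0 ≤ softCoveringDiv PX W M β) ∧
    (1 < β →
      softCoveringDiv PX W M β ≥
        max (Irenyi (pXY PX W) β - Real.logb 2 (M : ℝ)) 0) :=
  softCovering_one_shot_converse_general PX hPX hPXsum W hW hWsum M hM β
end
end

section
/- Non-negativity of the two-parameter Rényi mutual information: for all α ∈ (0,1)∪(1,∞) and β ∈ (0,∞), Ĩ_{α,β}(X:Y)_{P_XY} ≥ 0, with equality if and only if X and Y are independent, i.e. P_XY(x,y) = P_X(x)·P_Y(y) for all (x,y) ∈ 𝒳×𝒴. -/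
open scoped BigOperators

noncomputable section

variable {𝓧 𝓨 : Type*} [Fintype 𝓧] [Fintype 𝓨]

/-- non-negativity of the two-parameter Rényi mutual information,
with equality iff `X` and `Y` are independent. -/
theorem Itilde_nonneg_iff_indep
    [Nonempty 𝓧] [Nonempty 𝓨]
    (P : 𝓧 × 𝓨 → ℝ) (hP : ∀ p, 0 ≤ P p) (hPsum : ∑ p, P p = 1)
    (α β : ℝ) (hα : 0 < α) (hα1 : α ≠ 1) (hβ : 0 < β) :
    0 ≤ Itilde P α β ∧
      (Itilde P α β = 0 ↔ ∀ p : 𝓧 × 𝓨, P p = pX P p.1 * pY P p.2) := by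
  classical
  have hpX0 : ∀ x, 0 ≤ pX P x := fun x => Finset.sum_nonneg fun y _ => hP _
  have hpY0 : ∀ y, 0 ≤ pY P y := fun y => Finset.sum_nonneg fun x _ => hP _
  have hPleX : ∀ x y, P (x, y) ≤ pX P x := fun x y =>
    Finset.single_le_sum (fun y _ => hP (x, y)) (Finset.mem_univ y)
  have hPleY : ∀ x y, P (x, y) ≤ pY P y := fun x y =>
    Finset.single_le_sum (fun x _ => hP (x, y)) (Finset.mem_univ x)
  have hsumX : ∑ x, pX P x = 1 := by
    rw [← hPsum, Fintype.sum_prod_type]; rfl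
  have hsumY : ∑ y, pY P y = 1 := by
    rw [← hPsum, Fintype.sum_prod_type]
    exact Finset.sum_comm
  have hpXzero : ∀ x, ¬ 0 < pX P x → pX P x = 0 := fun x h => le_antisymm (not_lt.1 h) (hpX0 x)
  have hpYzero : ∀ y, ¬ 0 < pY P y → pY P y = 0 := fun y h => le_antisymm (not_lt.1 h) (hpY0 y)
  have hPzeroX : ∀ x y, ¬ 0 < pX P x → P (x, y) = 0 := fun x y h =>
    le_antisymm ((hPleX x y).trans (hpXzero x h).le) (hP _)
  have hPzeroY : ∀ x y, ¬ 0 < pY P y → P (x, y) = 0 := fun x y h =>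
    le_antisymm ((hPleY x y).trans (hpYzero y h).le) (hP _)
  have hsuppX : (∑ x, if 0 < pX P x then pX P x else 0) = 1 := by
    rw [← hsumX]
    refine Finset.sum_congr rfl fun x _ => ?_
    by_cases h : 0 < pX P x
    · simp [h]
    · simp [h, hpXzero x h]
  have hsuppY : (∑ y, if 0 < pY P y then pY P y else 0) = 1 := by
    rw [← hsumY]
    refine Finset.sum_congr rfl fun y _ => ?_
    by_cases h : 0 < pY P y
    · simp [h]
    · simp [h, hpYzero y h]
  have hcond0 : ∀ x y, 0 ≤ pCond P x y := fun x y => div_nonneg (hP _) (hpY0 y)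
  have hsumCond : ∀ y, 0 < pY P y → (∑ x, if 0 < pX P x then pCond P x y else 0) = 1 := by
    intro y hy
    have h1 : (∑ x, if 0 < pX P x then pCond P x y else 0) = ∑ x, pCond P x y := by
      refine Finset.sum_congr rfl fun x _ => ?_
      by_cases h : 0 < pX P x
      · simp [h]
      · simp [h, pCond, hPzeroX x y h]
    rw [h1]
    simp only [pCond]
    rw [← Finset.sum_div]
    exact div_self hy.ne'

  -- main objects
  set e := β / α with he
  have he0 : 0 < e := div_pos hβ hα
  set T : 𝓨 → ℝ := fun y => ∑ x, if 0 < pX P x then pX P x ^ (1 - α) * pCond P x y ^ α else 0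
    with hTdef
  set S : ℝ := ∑ y, if 0 < pY P y then pY P y * T y ^ e else 0 with hSdef
  have hTterm0 : ∀ y x, 0 ≤ (if 0 < pX P x then pX P x ^ (1 - α) * pCond P x y ^ α else 0) := by
    intro y x
    split
    · exact mul_nonneg (Real.rpow_nonneg (hpX0 x) _) (Real.rpow_nonneg (hcond0 x y) _)
    · exact le_refl 0
  have hT0 : ∀ y, 0 ≤ T y := fun y => Finset.sum_nonneg fun x _ => hTterm0 y x
  have hkey : ∀ x y, 0 < pX P x →
      pX P x ^ (1 - α) * pCond P x y ^ α = pX P x * (pCond P x y / pX P x) ^ α := by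
    intro x y hx
    rw [Real.div_rpow (hcond0 x y) (hpX0 x), Real.rpow_sub hx, Real.rpow_one]
    ring
  have hBern_ge : 1 < α → ∀ r : ℝ, 0 ≤ r → 1 + α * (r - 1) ≤ r ^ α := by
    intro h1 r hr
    have hs : (-1:ℝ) ≤ r - 1 := by linarith
    have h := one_add_mul_self_le_rpow_one_add hs h1.le
    have hr1 : 1 + (r - 1) = r := by ring
    rwa [hr1] at h
  have hBern_gt : 1 < α → ∀ r : ℝ, 0 ≤ r → r ≠ 1 → 1 + α * (r - 1) < r ^ α := by
    intro h1 r hr hne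
    have hs : (-1:ℝ) ≤ r - 1 := by linarith
    have h := one_add_mul_self_lt_rpow_one_add hs (by intro h0; exact hne (by linarith)) h1
    have hr1 : 1 + (r - 1) = r := by ring
    rwa [hr1] at h
  have hBern_le : α < 1 → ∀ r : ℝ, 0 ≤ r → r ^ α ≤ 1 + α * (r - 1) := by
    intro h1 r hr
    have hs : (-1:ℝ) ≤ r - 1 := by linarith
    have h := rpow_one_add_le_one_add_mul_self hs hα.le h1.le
    have hr1 : 1 + (r - 1) = r := by ring
    rwa [hr1] at h
  have hBern_lt : α < 1 → ∀ r : ℝ, 0 ≤ r → r ≠ 1 → r ^ α < 1 + α * (r - 1) := by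
    intro h1 r hr hne
    have hs : (-1:ℝ) ≤ r - 1 := by linarith
    have h := rpow_one_add_lt_one_add_mul_self hs (by intro h0; exact hne (by linarith)) hα h1
    have hr1 : 1 + (r - 1) = r := by ring
    rwa [hr1] at h
  have hLsum : ∀ y, 0 < pY P y →
      (∑ x, if 0 < pX P x then pX P x * (1 + α * (pCond P x y / pX P x - 1)) else 0) = 1 := by
    intro y hy
    have hterm : ∀ x, (if 0 < pX P x then pX P x * (1 + α * (pCond P x y / pX P x - 1)) else 0)
        = (if 0 < pX P x then pX P x else 0)
          + α * ((if 0 < pX P x then pCond P x y else 0)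
            - (if 0 < pX P x then pX P x else 0)) := by
      intro x
      by_cases h : 0 < pX P x
      · simp only [if_pos h]
        field_simp
      · simp [h]
    rw [Finset.sum_congr rfl fun x _ => hterm x]
    rw [Finset.sum_add_distrib, ← Finset.mul_sum, Finset.sum_sub_distrib]
    rw [hsuppX, hsumCond y hy]
    ring

  have hr0 : ∀ x y, 0 ≤ pCond P x y / pX P x := fun x y => div_nonneg (hcond0 x y) (hpX0 x)
  have hTge : 1 < α → ∀ y, 0 < pY P y → 1 ≤ T y := by
    intro hgt y hy
    rw [← hLsum y hy]
    refine Finset.sum_le_sum fun x _ => ?_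
    by_cases h : 0 < pX P x
    · simp only [if_pos h]
      rw [hkey x y h]
      exact mul_le_mul_of_nonneg_left (hBern_ge hgt _ (hr0 x y)) (hpX0 x)
    · simp [h]
  have hTle : α < 1 → ∀ y, 0 < pY P y → T y ≤ 1 := by
    intro hlt y hy
    rw [← hLsum y hy]
    refine Finset.sum_le_sum fun x _ => ?_
    by_cases h : 0 < pX P x
    · simp only [if_pos h]
      rw [hkey x y h]
      exact mul_le_mul_of_nonneg_left (hBern_le hlt _ (hr0 x y)) (hpX0 x)
    · simp [h]
  have hTpos : ∀ y, 0 < pY P y → 0 < T y := by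
    intro y hy
    obtain ⟨x0, -, hx0⟩ := Finset.exists_ne_zero_of_sum_ne_zero
      (show (∑ x, P (x, y)) ≠ 0 from hy.ne')
    have hPx0 : 0 < P (x0, y) := (hP _).lt_of_ne (Ne.symm hx0)
    have hpXx0 : 0 < pX P x0 := hPx0.trans_le (hPleX x0 y)
    have hcpos : 0 < pCond P x0 y := div_pos hPx0 hy
    have hterm : 0 < pX P x0 ^ (1 - α) * pCond P x0 y ^ α :=
      mul_pos (Real.rpow_pos_of_pos hpXx0 _) (Real.rpow_pos_of_pos hcpos _)
    calc (0:ℝ) < pX P x0 ^ (1 - α) * pCond P x0 y ^ α := hterm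
      _ = (if 0 < pX P x0 then pX P x0 ^ (1 - α) * pCond P x0 y ^ α else 0) := by
          rw [if_pos hpXx0]
      _ ≤ T y := Finset.single_le_sum (fun x _ => hTterm0 y x) (Finset.mem_univ x0)
  have hSterm0 : ∀ y, 0 ≤ (if 0 < pY P y then pY P y * T y ^ e else 0) := by
    intro y
    split
    · exact mul_nonneg (hpY0 y) (Real.rpow_nonneg (hT0 y) _)
    · exact le_refl 0
  have hSpos : 0 < S := by
    obtain ⟨y0, -, hy0⟩ := Finset.exists_ne_zero_of_sum_ne_zero
      (show (∑ y, pY P y) ≠ 0 by rw [hsumY]; exact one_ne_zero)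
    have hy0' : 0 < pY P y0 := (hpY0 y0).lt_of_ne (Ne.symm hy0)
    calc (0:ℝ) < pY P y0 * T y0 ^ e :=
          mul_pos hy0' (Real.rpow_pos_of_pos (hTpos y0 hy0') _)
      _ = (if 0 < pY P y0 then pY P y0 * T y0 ^ e else 0) := by rw [if_pos hy0']
      _ ≤ S := Finset.single_le_sum (fun y _ => hSterm0 y) (Finset.mem_univ y0)
  have hSge : 1 < α → 1 ≤ S := by
    intro hgt
    rw [← hsuppY]
    refine Finset.sum_le_sum fun y _ => ?_
    by_cases h : 0 < pY P y
    · simp only [if_pos h]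
      have h1 : 1 ≤ T y ^ e := by
        calc (1:ℝ) = 1 ^ e := (Real.one_rpow e).symm
          _ ≤ T y ^ e := Real.rpow_le_rpow zero_le_one (hTge hgt y h) he0.le
      exact le_mul_of_one_le_right h.le h1
    · simp [h]
  have hSle : α < 1 → S ≤ 1 := by
    intro hlt
    rw [← hsuppY]
    refine Finset.sum_le_sum fun y _ => ?_
    by_cases h : 0 < pY P y
    · simp only [if_pos h]
      exact mul_le_of_le_one_right h.le (Real.rpow_le_one (hT0 y) (hTle hlt y h) he0.le)
    · simp [h]

  -- independence implies S = 1
  have hindep_S : (∀ p : 𝓧 × 𝓨, P p = pX P p.1 * pY P p.2) → S = 1 := by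
    intro hind
    have hTone : ∀ y, 0 < pY P y → T y = 1 := by
      intro y hy
      have hc : ∀ x, pCond P x y = pX P x := by
        intro x
        have := hind (x, y)
        simp only [pCond, this]
        rw [mul_div_assoc, div_self hy.ne', mul_one]
      calc T y = ∑ x, if 0 < pX P x then pX P x else 0 := by
            refine Finset.sum_congr rfl fun x _ => ?_
            by_cases h : 0 < pX P x
            · simp only [if_pos h, hc x]
              rw [← Real.rpow_add h, sub_add_cancel, Real.rpow_one]
            · simp [h]
        _ = 1 := hsuppX
    calc S = ∑ y, if 0 < pY P y then pY P y else 0 := by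
          refine Finset.sum_congr rfl fun y _ => ?_
          by_cases h : 0 < pY P y
          · simp [h, hTone y h]
          · simp [h]
      _ = 1 := hsuppY
  -- S = 1 implies independence
  have hS_indep : S = 1 → ∀ p : 𝓧 × 𝓨, P p = pX P p.1 * pY P p.2 := by
    intro hS1
    -- first: T y = 1 for all y in the support
    have hTone : ∀ y, 0 < pY P y → T y = 1 := by
      intro y hy
      have hTe : T y ^ e = 1 := by
        have heq : ∀ y' ∈ Finset.univ, (if 0 < pY P y' then pY P y' else 0)
            = (if 0 < pY P y' then pY P y' * T y' ^ e else 0) := by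
          rcases lt_or_gt_of_ne hα1 with hlt | hgt
          · -- α < 1 : upper bound direction
            have h := (Finset.sum_eq_sum_iff_of_le (s := (Finset.univ : Finset 𝓨))
              (f := fun y' => if 0 < pY P y' then pY P y' * T y' ^ e else 0)
              (g := fun y' => if 0 < pY P y' then pY P y' else 0)
              (fun y' _ => by
                by_cases h' : 0 < pY P y'
                · simp only [if_pos h']
                  exact mul_le_of_le_one_right h'.le
                    (Real.rpow_le_one (hT0 y') (hTle hlt y' h') he0.le)
                · simp [h'])).1
              (by rw [hsuppY]; exact hS1)
            intro y' hy'; exact (h y' hy').symm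
          · -- 1 < α : lower bound direction
            exact (Finset.sum_eq_sum_iff_of_le (s := (Finset.univ : Finset 𝓨)) (fun y' _ => by
              by_cases h' : 0 < pY P y'
              · simp only [if_pos h']
                have h1 : 1 ≤ T y' ^ e := by
                  calc (1:ℝ) = 1 ^ e := (Real.one_rpow e).symm
                    _ ≤ T y' ^ e := Real.rpow_le_rpow zero_le_one (hTge hgt y' h') he0.le
                exact le_mul_of_one_le_right h'.le h1
              · simp [h'])).1 (by rw [hsuppY]; exact hS1.symm)
        have h2 := heq y (Finset.mem_univ y)
        rw [if_pos hy, if_pos hy] at h2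
        have h3 : pY P y * 1 = pY P y * T y ^ e := by rw [mul_one]; exact h2
        exact (mul_left_cancel₀ hy.ne' h3).symm
      rcases lt_trichotomy (T y) 1 with h | h | h
      · exact absurd hTe (by
          have := Real.rpow_lt_one (hT0 y) h he0
          exact this.ne)
      · exact h
      · exact absurd hTe (by
          have : 1 < T y ^ e := (Real.one_lt_rpow_iff_of_pos (hTpos y hy)).2
            (Or.inl ⟨h, he0⟩)
          exact this.ne')
    -- second: pointwise equality on the support
    have main : ∀ y, 0 < pY P y → ∀ x, 0 < pX P x → P (x, y) = pX P x * pY P y := by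
      intro y hy x hx
      have hpt : pX P x * (1 + α * (pCond P x y / pX P x - 1))
          = pX P x ^ (1 - α) * pCond P x y ^ α := by
        have heq : ∀ x' ∈ Finset.univ,
            (if 0 < pX P x' then pX P x' * (1 + α * (pCond P x' y / pX P x' - 1)) else 0)
            = (if 0 < pX P x' then pX P x' ^ (1 - α) * pCond P x' y ^ α else 0) := by
          rcases lt_or_gt_of_ne hα1 with hlt | hgt
          · have h := (Finset.sum_eq_sum_iff_of_le (s := (Finset.univ : Finset 𝓧))
              (f := fun x' => if 0 < pX P x' then pX P x' ^ (1 - α) * pCond P x' y ^ α else 0)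
              (g := fun x' =>
                if 0 < pX P x' then pX P x' * (1 + α * (pCond P x' y / pX P x' - 1)) else 0)
              (fun x' _ => by
                by_cases h' : 0 < pX P x'
                · simp only [if_pos h']
                  rw [hkey x' y h']
                  exact mul_le_mul_of_nonneg_left (hBern_le hlt _ (hr0 x' y)) (hpX0 x')
                · simp [h'])).1
              (by rw [hLsum y hy]; exact hTone y hy)
            intro x' hx'; exact (h x' hx').symm
          · exact (Finset.sum_eq_sum_iff_of_le (s := (Finset.univ : Finset 𝓧)) (fun x' _ => by
              by_cases h' : 0 < pX P x'
              · simp only [if_pos h']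
                rw [hkey x' y h']
                exact mul_le_mul_of_nonneg_left (hBern_ge hgt _ (hr0 x' y)) (hpX0 x')
              · simp [h'])).1 (by rw [hLsum y hy]; exact (hTone y hy).symm)
        have h2 := heq x (Finset.mem_univ x)
        rwa [if_pos hx, if_pos hx] at h2
      -- deduce pCond x y / pX x = 1
      have hr1 : pCond P x y / pX P x = 1 := by
        rw [hkey x y hx] at hpt
        have hcan : 1 + α * (pCond P x y / pX P x - 1) = (pCond P x y / pX P x) ^ α :=
          mul_left_cancel₀ hx.ne' hpt
        by_contra hne
        rcases lt_or_gt_of_ne hα1 with hlt | hgt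
        · exact absurd hcan (hBern_lt hlt _ (hr0 x y) hne).ne'
        · exact absurd hcan (hBern_gt hgt _ (hr0 x y) hne).ne
      have hc : pCond P x y = pX P x := by
        field_simp at hr1
        exact hr1
      have : P (x, y) / pY P y = pX P x := hc
      field_simp at this
      linarith [this]
    intro p
    obtain ⟨x, y⟩ := p
    by_cases hx : 0 < pX P x
    · by_cases hy : 0 < pY P y
      · exact main y hy x hx
      · simp only
        rw [hPzeroY x y hy, hpYzero y hy, mul_zero]
    · simp only
      rw [hPzeroX x y hx, hpXzero x hx, zero_mul]

  -- assembly
  have hIt : Itilde P α β = α / (β * (α - 1)) * Real.logb 2 S := rfl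
  have hlog_iff : Real.logb 2 S = 0 ↔ S = 1 := by
    constructor
    · intro h
      have h2 : Real.log S = 0 := by
        have := (div_eq_zero_iff).1 h
        rcases this with h' | h'
        · exact h'
        · exact absurd h' (Real.log_pos one_lt_two).ne'
      rcases Real.log_eq_zero.1 h2 with h' | h' | h'
      · exact absurd h' hSpos.ne'
      · exact h'
      · exact absurd h' (by linarith)
    · intro h; rw [h, Real.logb_one]
  have hcne : α / (β * (α - 1)) ≠ 0 := by
    rcases lt_or_gt_of_ne hα1 with hlt | hgt
    · exact (div_neg_of_pos_of_neg hα (mul_neg_of_pos_of_neg hβ (by linarith))).ne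
    · exact (div_pos hα (mul_pos hβ (by linarith))).ne'
  have hnonneg : 0 ≤ Itilde P α β := by
    rw [hIt]
    rcases lt_or_gt_of_ne hα1 with hlt | hgt
    · have h1 := (div_neg_of_pos_of_neg hα (mul_neg_of_pos_of_neg hβ (by linarith : α - 1 < 0))).le
      have h2 := Real.logb_nonpos one_lt_two hSpos.le (hSle hlt)
      nlinarith
    · exact mul_nonneg
        (div_pos hα (mul_pos hβ (by linarith))).le
        (Real.logb_nonneg one_lt_two (hSge hgt))
  refine ⟨hnonneg, ?_, ?_⟩
  · intro h0
    apply hS_indep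
    apply hlog_iff.1
    rw [hIt] at h0
    rcases mul_eq_zero.1 h0 with h' | h'
    · exact absurd h' hcne
    · exact h'
  · intro hind
    rw [hIt, hlog_iff.2 (hindep_S hind), mul_zero]
end
end

section
/- The two-parameter Rényi mutual information is additive on product distributions: for all α ∈ (0,1)∪(1,∞) and β ∈ (0,∞), if P_XY is a probability distribution on 𝒳×𝒴 and Q_{X'Y'} is a probability distribution on 𝒳'×𝒴', then the two-parameter Rényi mutual information of the product distribution P_XY × Q_{X'Y'} on (𝒳×𝒳')×(𝒴×𝒴') (between the joint variables (X,X') and (Y,Y')) equals Ĩ_{α,β}(X:Y)_{P_XY} + Ĩ_{α,β}(X':Y')_{Q_{X'Y'}}. -/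
open scoped BigOperators

noncomputable section

variable {𝓧 𝓨 : Type*} [Fintype 𝓧] [Fintype 𝓨]

namespace ItildeAux

/-- Inner sum of the Rényi mutual information. -/
def innS (P : 𝓧 × 𝓨 → ℝ) (α : ℝ) (y : 𝓨) : ℝ :=
  ∑ x, if 0 < pX P x then pX P x ^ (1 - α) * pCond P x y ^ α else 0

/-- Outer sum of the Rényi mutual information. -/
def outS (P : 𝓧 × 𝓨 → ℝ) (α β : ℝ) : ℝ :=
  ∑ y, if 0 < pY P y then pY P y * (innS P α y) ^ (β / α) else 0

lemma Itilde_eq (P : 𝓧 × 𝓨 → ℝ) (α β : ℝ) :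
    Itilde P α β = α / (β * (α - 1)) * Real.logb 2 (outS P α β) := rfl

lemma pX_nonneg (P : 𝓧 × 𝓨 → ℝ) (hP : ∀ p, 0 ≤ P p) (x : 𝓧) : 0 ≤ pX P x :=
  Finset.sum_nonneg fun y _ => hP (x, y)

lemma pY_nonneg (P : 𝓧 × 𝓨 → ℝ) (hP : ∀ p, 0 ≤ P p) (y : 𝓨) : 0 ≤ pY P y :=
  Finset.sum_nonneg fun x _ => hP (x, y)

lemma pCond_nonneg (P : 𝓧 × 𝓨 → ℝ) (hP : ∀ p, 0 ≤ P p) (x : 𝓧) (y : 𝓨) :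
    0 ≤ pCond P x y :=
  div_nonneg (hP _) (pY_nonneg P hP y)

lemma innS_nonneg (P : 𝓧 × 𝓨 → ℝ) (hP : ∀ p, 0 ≤ P p) (α : ℝ) (y : 𝓨) :
    0 ≤ innS P α y := by
  refine Finset.sum_nonneg fun x _ => ?_
  by_cases h : 0 < pX P x
  · simp only [h, if_true]
    exact mul_nonneg (Real.rpow_nonneg (pX_nonneg P hP x) _)
      (Real.rpow_nonneg (pCond_nonneg P hP x y) _)
  · simp [h]

lemma mul_pos_iff' {a b : ℝ} (ha : 0 ≤ a) (hb : 0 ≤ b) :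
    0 < a * b ↔ 0 < a ∧ 0 < b := by
  constructor
  · intro h
    refine ⟨ha.lt_of_ne ?_, hb.lt_of_ne ?_⟩
    · rintro rfl; simp at h
    · rintro rfl; simp at h
  · rintro ⟨h1, h2⟩; exact mul_pos h1 h2

variable {𝓧' 𝓨' : Type*} [Fintype 𝓧'] [Fintype 𝓨']

lemma pX_prod (P : 𝓧 × 𝓨 → ℝ) (Q : 𝓧' × 𝓨' → ℝ) (x : 𝓧) (x' : 𝓧') :
    pX (fun p : (𝓧 × 𝓧') × (𝓨 × 𝓨') => P (p.1.1, p.2.1) * Q (p.1.2, p.2.2)) (x, x')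
      = pX P x * pX Q x' := by
  unfold pX
  rw [Finset.sum_mul_sum, Fintype.sum_prod_type]

lemma pY_prod (P : 𝓧 × 𝓨 → ℝ) (Q : 𝓧' × 𝓨' → ℝ) (y : 𝓨) (y' : 𝓨') :
    pY (fun p : (𝓧 × 𝓧') × (𝓨 × 𝓨') => P (p.1.1, p.2.1) * Q (p.1.2, p.2.2)) (y, y')
      = pY P y * pY Q y' := by
  unfold pY
  rw [Finset.sum_mul_sum, Fintype.sum_prod_type]

lemma pCond_prod (P : 𝓧 × 𝓨 → ℝ) (Q : 𝓧' × 𝓨' → ℝ) (x : 𝓧) (x' : 𝓧')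
    (y : 𝓨) (y' : 𝓨') :
    pCond (fun p : (𝓧 × 𝓧') × (𝓨 × 𝓨') => P (p.1.1, p.2.1) * Q (p.1.2, p.2.2))
        (x, x') (y, y')
      = pCond P x y * pCond Q x' y' := by
  unfold pCond
  rw [pY_prod, div_mul_div_comm]

lemma innS_prod (P : 𝓧 × 𝓨 → ℝ) (hP : ∀ p, 0 ≤ P p)
    (Q : 𝓧' × 𝓨' → ℝ) (hQ : ∀ p, 0 ≤ Q p) (α : ℝ) (y : 𝓨) (y' : 𝓨') :
    innS (fun p : (𝓧 × 𝓧') × (𝓨 × 𝓨') => P (p.1.1, p.2.1) * Q (p.1.2, p.2.2))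
        α (y, y')
      = innS P α y * innS Q α y' := by
  unfold innS
  rw [Finset.sum_mul_sum, Fintype.sum_prod_type]
  refine Finset.sum_congr rfl fun x _ => Finset.sum_congr rfl fun x' _ => ?_
  rw [pX_prod, pCond_prod]
  simp only [mul_pos_iff' (pX_nonneg P hP x) (pX_nonneg Q hQ x')]
  by_cases h1 : 0 < pX P x
  · by_cases h2 : 0 < pX Q x'
    · simp only [h1, h2, and_self, if_true]
      rw [Real.mul_rpow (pX_nonneg P hP x) (pX_nonneg Q hQ x'),
        Real.mul_rpow (pCond_nonneg P hP x y) (pCond_nonneg Q hQ x' y')]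
      ring
    · simp [h1, h2]
  · simp [h1]

lemma outS_prod (P : 𝓧 × 𝓨 → ℝ) (hP : ∀ p, 0 ≤ P p)
    (Q : 𝓧' × 𝓨' → ℝ) (hQ : ∀ p, 0 ≤ Q p) (α β : ℝ) :
    outS (fun p : (𝓧 × 𝓧') × (𝓨 × 𝓨') => P (p.1.1, p.2.1) * Q (p.1.2, p.2.2)) α β
      = outS P α β * outS Q α β := by
  unfold outS
  rw [Finset.sum_mul_sum, Fintype.sum_prod_type]
  refine Finset.sum_congr rfl fun y _ => Finset.sum_congr rfl fun y' _ => ?_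
  rw [pY_prod, innS_prod P hP Q hQ]
  simp only [mul_pos_iff' (pY_nonneg P hP y) (pY_nonneg Q hQ y')]
  by_cases h1 : 0 < pY P y
  · by_cases h2 : 0 < pY Q y'
    · simp only [h1, h2, and_self, if_true]
      rw [Real.mul_rpow (innS_nonneg P hP α y) (innS_nonneg Q hQ α y')]
      ring
    · simp [h1, h2]
  · simp [h1]

lemma outS_pos (P : 𝓧 × 𝓨 → ℝ) (hP : ∀ p, 0 ≤ P p) (hPsum : ∑ p, P p = 1)
    (α β : ℝ) : 0 < outS P α β := by
  -- there is a y with pY P y > 0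
  have hsum : ∑ y, pY P y = 1 := by
    rw [← hPsum, Fintype.sum_prod_type_right]; rfl
  have hy : ∃ y, 0 < pY P y := by
    by_contra h
    push_neg at h
    have : ∑ y, pY P y = 0 := by
      have := fun y => le_antisymm (h y) (pY_nonneg P hP y)
      simp [this]
    rw [hsum] at this; norm_num at this
  obtain ⟨y, hy⟩ := hy
  -- there is an x with P (x, y) > 0
  have hx : ∃ x, 0 < P (x, y) := by
    by_contra h
    push_neg at h
    have : pY P y = 0 := by
      have := fun x => le_antisymm (h x) (hP (x, y))
      simp [pY, this]
    rw [this] at hy; exact lt_irrefl _ hy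
  obtain ⟨x, hx⟩ := hx
  have hpx : 0 < pX P x :=
    lt_of_lt_of_le hx (Finset.single_le_sum (fun y _ => hP (x, y)) (Finset.mem_univ y))
  have hcond : 0 < pCond P x y := div_pos hx hy
  have hinn : 0 < innS P α y := by
    refine Finset.sum_pos' (fun x _ => ?_) ⟨x, Finset.mem_univ x, ?_⟩
    · by_cases h : 0 < pX P x
      · simp only [h, if_true]
        exact mul_nonneg (Real.rpow_nonneg (pX_nonneg P hP x) _)
          (Real.rpow_nonneg (pCond_nonneg P hP x y) _)
      · simp [h]
    · simp only [hpx, if_true]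
      exact mul_pos (Real.rpow_pos_of_pos hpx _) (Real.rpow_pos_of_pos hcond _)
  refine Finset.sum_pos' (fun y _ => ?_) ⟨y, Finset.mem_univ y, ?_⟩
  · by_cases h : 0 < pY P y
    · simp only [h, if_true]
      exact mul_nonneg (le_of_lt h) (Real.rpow_nonneg (innS_nonneg P hP α y) _)
    · simp [h]
  · simp only [hy, if_true]
    exact mul_pos hy (Real.rpow_pos_of_pos hinn _)

end ItildeAux

open ItildeAux in
/-- additivity of the two-parameter Rényi mutual information on
product distributions. -/
theorem Itilde_additive
    {𝓧' 𝓨' : Type*} [Fintype 𝓧'] [Fintype 𝓨']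
    [Nonempty 𝓧] [Nonempty 𝓨] [Nonempty 𝓧'] [Nonempty 𝓨']
    (P : 𝓧 × 𝓨 → ℝ) (hP : ∀ p, 0 ≤ P p) (hPsum : ∑ p, P p = 1)
    (Q : 𝓧' × 𝓨' → ℝ) (hQ : ∀ p, 0 ≤ Q p) (hQsum : ∑ p, Q p = 1)
    (α β : ℝ) (hα : 0 < α) (hα1 : α ≠ 1) (hβ : 0 < β) :
    Itilde (fun p : (𝓧 × 𝓧') × (𝓨 × 𝓨') =>
        P (p.1.1, p.2.1) * Q (p.1.2, p.2.2)) α β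
      = Itilde P α β + Itilde Q α β := by
  rw [Itilde_eq, Itilde_eq, Itilde_eq, outS_prod P hP Q hQ,
    Real.logb_mul (outS_pos P hP hPsum α β).ne' (outS_pos Q hQ hQsum α β).ne',
    mul_add]
end
end

section
/- For every fixed β ∈ (0,∞), the map α ↦ Ĩ_{α,β}(X:Y) is non-decreasing on (0,∞): for all 0 < b ≤ a < ∞, Ĩ_{b,β}(X:Y) ≤ Ĩ_{a,β}(X:Y), where at α = 1 the value is Ĩ_{1,β}(X:Y) = I(X:Y). -/
/-!
Write `r_y = P_{X|Y=y} / P_X` and `s = 1 - 1/α`, which increases with `α`. Then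
`Ĩ_{α,β} = H(s) / (β s)` with `H(s) = log ∑_y P_Y(y) (E_{P_{X|Y=y}} r_y^{α-1})^{β/α}`.
Jensen's inequality for the concave power `x ↦ x^t`, applied first in `x` and then in `y`, gives
`H(t s) ≤ t H(s)` for `t ∈ [0, 1]`, so the chord slope `H(s) / s` is non-decreasing on each side
of `0`. Jensen's inequality for `log`, applied in the same two places, gives `H(s) ≥ β s I(X:Y)`,
which puts the Shannon value at `s = 0` between the two sides.
-/

open scoped BigOperators

noncomputable section

variable {𝓧 𝓨 : Type*} [Fintype 𝓧] [Fintype 𝓨]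

/-- Shannon mutual information `I(X:Y)`. -/
def shannonMI (P : 𝓧 × 𝓨 → ℝ) : ℝ :=
  ∑ p, if 0 < P p then P p * Real.logb 2 (pCond P p.1 p.2 / pX P p.1) else 0

/-- Two-parameter Rényi mutual information, continuously extended at `α = 1`. -/
def ItildeE (P : 𝓧 × 𝓨 → ℝ) (α β : ℝ) : ℝ :=
  if α = 1 then shannonMI P else Itilde P α β

end

section Jensen

variable {ι : Type*}

theorem sum_mul_logb_le_logb_sum_mul {b : ℝ} (hb : 1 < b) (s : Finset ι) {w z : ι → ℝ}
    (hw : ∀ i ∈ s, 0 ≤ w i) (hw1 : ∑ i ∈ s, w i = 1) (hz : ∀ i ∈ s, 0 < w i → 0 < z i) :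
    ∑ i ∈ s, w i * Real.logb b (z i) ≤ Real.logb b (∑ i ∈ s, w i * z i) := by
  set t := s.filter fun i => 0 < w i
  have sum_support : ∀ g : ι → ℝ, ∑ i ∈ t, w i * g i = ∑ i ∈ s, w i * g i := fun g =>
    Finset.sum_filter_of_ne fun i hi h => (hw i hi).lt_of_ne' (left_ne_zero_of_mul h)
  have jensen := strictConcaveOn_log_Ioi.concaveOn.le_map_sum (t := t) (w := w) (p := z)
    (fun i hi => hw i (Finset.mem_filter.1 hi).1)
    (by simpa [hw1] using sum_support 1)
    (fun i hi => hz i (Finset.mem_filter.1 hi).1 (Finset.mem_filter.1 hi).2)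
  simp only [smul_eq_mul, sum_support] at jensen
  simp only [Real.logb, mul_div_assoc', ← Finset.sum_div]
  exact div_le_div_of_nonneg_right jensen (Real.log_pos hb).le

theorem sum_mul_rpow_le_rpow_sum_mul (s : Finset ι) {w z : ι → ℝ} {p : ℝ} (hp₀ : 0 ≤ p)
    (hp₁ : p ≤ 1) (hw : ∀ i ∈ s, 0 ≤ w i) (hw1 : ∑ i ∈ s, w i = 1) (hz : ∀ i ∈ s, 0 ≤ z i) :
    ∑ i ∈ s, w i * z i ^ p ≤ (∑ i ∈ s, w i * z i) ^ p := by
  simpa only [smul_eq_mul] using (Real.concaveOn_rpow hp₀ hp₁).le_map_sum hw hw1 hz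

end Jensen

theorem monotoneOn_slope_of_subhomogeneous {D : Set ℝ} {f : ℝ → ℝ} {c : ℝ}
    (hsub : ∀ s ∈ D, ∀ t ∈ Set.Ioo (0 : ℝ) 1, f (t * s) ≤ t * f s)
    (htangent : ∀ s ∈ D, c * s ≤ f s) :
    MonotoneOn (fun s => if s = 0 then c else f s / s) D := by
  have below {s} (hs : s ∈ D) (hneg : s < 0) : f s / s ≤ c :=
    (div_le_iff_of_neg hneg).2 (htangent s hs)
  have above {s} (hs : s ∈ D) (hpos : 0 < s) : c ≤ f s / s :=
    (le_div_iff₀ hpos).2 (htangent s hs)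
  intro s hs s' hs' hss'
  rcases hss'.eq_or_lt with rfl | hlt
  · rfl
  dsimp only
  rcases lt_trichotomy s 0 with hs0 | rfl | hs0
  · rw [if_neg hs0.ne]
    rcases lt_trichotomy s' 0 with hs'0 | rfl | hs'0
    · have hle := hsub s hs (s' / s) ⟨div_pos_of_neg_of_neg hs'0 hs0, (div_lt_one_of_neg hs0).2 hlt⟩
      rw [div_mul_cancel₀ _ hs0.ne] at hle
      calc f s / s = s' / s * f s / s' := by field_simp [hs'0.ne]
        _ ≤ f s' / s' := div_le_div_of_nonpos_of_le hs'0.le hle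
        _ = _ := (if_neg hs'0.ne).symm
    · exact (below hs hs0).trans_eq (if_pos rfl).symm
    · exact (below hs hs0).trans ((above hs' hs'0).trans_eq (if_neg hs'0.ne').symm)
  · rw [if_pos rfl, if_neg hlt.ne']
    exact above hs' hlt
  · have hs'0 := hs0.trans hlt
    have hle := hsub s' hs' (s / s') ⟨div_pos hs0 hs'0, (div_lt_one hs'0).2 hlt⟩
    rw [div_mul_cancel₀ _ hs'0.ne'] at hle
    rw [if_neg hs0.ne', if_neg hs'0.ne']
    calc f s / s ≤ s / s' * f s' / s := div_le_div_of_nonneg_right hle hs0.le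
      _ = f s' / s' := by field_simp

variable {𝓧 𝓨 : Type*}

section Marginals

variable {P : 𝓧 × 𝓨 → ℝ}

theorem pX_nonneg [Fintype 𝓨] (hP : ∀ p, 0 ≤ P p) (x : 𝓧) : 0 ≤ pX P x :=
  Finset.sum_nonneg fun _ _ => hP _

theorem pY_nonneg [Fintype 𝓧] (hP : ∀ p, 0 ≤ P p) (y : 𝓨) : 0 ≤ pY P y :=
  Finset.sum_nonneg fun _ _ => hP _

theorem pCond_nonneg [Fintype 𝓧] (hP : ∀ p, 0 ≤ P p) (x : 𝓧) (y : 𝓨) : 0 ≤ pCond P x y :=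
  div_nonneg (hP _) (pY_nonneg hP y)

theorem le_pX [Fintype 𝓨] (hP : ∀ p, 0 ≤ P p) (x : 𝓧) (y : 𝓨) : P (x, y) ≤ pX P x :=
  Finset.single_le_sum (fun i _ => hP (x, i)) (Finset.mem_univ y)

theorem le_pY [Fintype 𝓧] (hP : ∀ p, 0 ≤ P p) (x : 𝓧) (y : 𝓨) : P (x, y) ≤ pY P y :=
  Finset.single_le_sum (fun i _ => hP (i, y)) (Finset.mem_univ x)

theorem sum_pY [Fintype 𝓧] [Fintype 𝓨] (hPsum : ∑ p, P p = 1) : ∑ y, pY P y = 1 := by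
  rw [← hPsum, Fintype.sum_prod_type, Finset.sum_comm]
  rfl

theorem sum_pCond [Fintype 𝓧] {y : 𝓨} (hy : pY P y ≠ 0) : ∑ x, pCond P x y = 1 := by
  simp only [pCond, ← Finset.sum_div]
  exact div_self hy

theorem pY_mul_pCond [Fintype 𝓧] (hP : ∀ p, 0 ≤ P p) (x : 𝓧) (y : 𝓨) :
    pY P y * pCond P x y = P (x, y) := by
  rcases (pY_nonneg hP y).eq_or_lt with hy | hy
  · simp [pCond, ← hy, le_antisymm (hy ▸ le_pY hP x y) (hP _)]
  · exact mul_div_cancel₀ _ hy.ne'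

theorem pos_of_pCond_pos [Fintype 𝓧] (hP : ∀ p, 0 ≤ P p) {x : 𝓧} {y : 𝓨}
    (h : 0 < pCond P x y) : 0 < P (x, y) :=
  (pY_mul_pCond hP x y).symm ▸ mul_pos ((pY_nonneg hP y).lt_of_ne fun hy => by
    simp [pCond, ← hy] at h) h

end Marginals

variable [Fintype 𝓧] [Fintype 𝓨]

noncomputable def densityRatio (P : 𝓧 × 𝓨 → ℝ) (x : 𝓧) (y : 𝓨) : ℝ := pCond P x y / pX P x

/-- `∑ₓ P_X(x)^{1-α} P_{X|Y}(x|y)^α`, written as an expectation under `P_{X|Y=y}`. -/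
noncomputable def ratioMoment (P : 𝓧 × 𝓨 → ℝ) (α : ℝ) (y : 𝓨) : ℝ :=
  ∑ x, pCond P x y * densityRatio P x y ^ (α - 1)

noncomputable def renyiSum (P : 𝓧 × 𝓨 → ℝ) (α β : ℝ) : ℝ :=
  ∑ y, pY P y * ratioMoment P α y ^ (β / α)

noncomputable def condMI (P : 𝓧 × 𝓨 → ℝ) (y : 𝓨) : ℝ :=
  ∑ x, pCond P x y * Real.logb 2 (densityRatio P x y)

section RenyiSum

variable {P : 𝓧 × 𝓨 → ℝ}

theorem densityRatio_nonneg (hP : ∀ p, 0 ≤ P p) (x : 𝓧) (y : 𝓨) : 0 ≤ densityRatio P x y :=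
  div_nonneg (pCond_nonneg hP x y) (pX_nonneg hP x)

theorem densityRatio_pos (hP : ∀ p, 0 ≤ P p) {x : 𝓧} {y : 𝓨} (h : 0 < pCond P x y) :
    0 < densityRatio P x y :=
  div_pos h ((pos_of_pCond_pos hP h).trans_le (le_pX hP x y))

theorem ratioMoment_nonneg (hP : ∀ p, 0 ≤ P p) (α : ℝ) (y : 𝓨) : 0 ≤ ratioMoment P α y :=
  Finset.sum_nonneg fun x _ =>
    mul_nonneg (pCond_nonneg hP x y) (Real.rpow_nonneg (densityRatio_nonneg hP x y) _)

theorem ratioMoment_pos (hP : ∀ p, 0 ≤ P p) (α : ℝ) {y : 𝓨} (hy : 0 < pY P y) :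
    0 < ratioMoment P α y := by
  obtain ⟨x, -, hx⟩ :=
    Finset.exists_ne_zero_of_sum_ne_zero ((sum_pCond hy.ne').trans_ne one_ne_zero)
  have hx' := (pCond_nonneg hP x y).lt_of_ne' hx
  exact Finset.sum_pos'
    (fun x _ => mul_nonneg (pCond_nonneg hP x y) (Real.rpow_nonneg (densityRatio_nonneg hP x y) _))
    ⟨x, Finset.mem_univ x, mul_pos hx' (Real.rpow_pos_of_pos (densityRatio_pos hP hx') _)⟩

theorem renyiSum_pos (hP : ∀ p, 0 ≤ P p) (hPsum : ∑ p, P p = 1) (α β : ℝ) :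
    0 < renyiSum P α β := by
  obtain ⟨y, -, hy⟩ :=
    Finset.exists_ne_zero_of_sum_ne_zero ((sum_pY hPsum).trans_ne one_ne_zero)
  have hy' := (pY_nonneg hP y).lt_of_ne' hy
  exact Finset.sum_pos'
    (fun y _ => mul_nonneg (pY_nonneg hP y) (Real.rpow_nonneg (ratioMoment_nonneg hP α y) _))
    ⟨y, Finset.mem_univ y, mul_pos hy' (Real.rpow_pos_of_pos (ratioMoment_pos hP α hy') _)⟩

theorem sum_ite_eq_ratioMoment (hP : ∀ p, 0 ≤ P p) {α : ℝ} (hα : α ≠ 0) (y : 𝓨) :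
    (∑ x, if 0 < pX P x then pX P x ^ (1 - α) * pCond P x y ^ α else 0) =
      ratioMoment P α y := by
  refine Finset.sum_congr rfl fun x _ => ?_
  rcases (pCond_nonneg hP x y).eq_or_lt with h | h
  · simp [← h, Real.zero_rpow hα]
  have hX := (pos_of_pCond_pos hP h).trans_le (le_pX hP x y)
  rw [if_pos hX, densityRatio, Real.div_rpow h.le hX.le, Real.rpow_sub hX, Real.rpow_one,
    Real.rpow_sub_one h.ne', Real.rpow_sub_one hX.ne']
  field_simp

theorem Itilde_eq (hP : ∀ p, 0 ≤ P p) {α : ℝ} (hα : α ≠ 0) (β : ℝ) :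
    Itilde P α β = α / (β * (α - 1)) * Real.logb 2 (renyiSum P α β) := by
  rw [Itilde, renyiSum]
  congr 2
  refine Finset.sum_congr rfl fun y _ => ?_
  rw [sum_ite_eq_ratioMoment hP hα, ite_eq_left_iff]
  intro hy
  rw [le_antisymm (not_lt.1 hy) (pY_nonneg hP y), zero_mul]

theorem shannonMI_eq (hP : ∀ p, 0 ≤ P p) : shannonMI P = ∑ y, pY P y * condMI P y := by
  simp only [shannonMI, condMI, densityRatio, Finset.mul_sum, ← mul_assoc, pY_mul_pCond hP]
  rw [Fintype.sum_prod_type, Finset.sum_comm]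
  refine Finset.sum_congr rfl fun y _ => Finset.sum_congr rfl fun x _ => ?_
  rw [ite_eq_left_iff]
  intro h
  rw [le_antisymm (not_lt.1 h) (hP _), zero_mul]

theorem mul_condMI_le_logb_ratioMoment (hP : ∀ p, 0 ≤ P p) (α : ℝ) {y : 𝓨} (hy : 0 < pY P y) :
    (α - 1) * condMI P y ≤ Real.logb 2 (ratioMoment P α y) :=
  calc (α - 1) * condMI P y
      = ∑ x, pCond P x y * Real.logb 2 (densityRatio P x y ^ (α - 1)) := by
        rw [condMI, Finset.mul_sum]
        refine Finset.sum_congr rfl fun x _ => ?_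
        rcases (pCond_nonneg hP x y).eq_or_lt with h | h
        · rw [← h]; ring
        · rw [Real.logb_rpow_eq_mul_logb_of_pos (densityRatio_pos hP h)]; ring
    _ ≤ _ := sum_mul_logb_le_logb_sum_mul one_lt_two _ (fun x _ => pCond_nonneg hP x y)
        (sum_pCond hy.ne') fun x _ hx => Real.rpow_pos_of_pos (densityRatio_pos hP hx) _

theorem mul_shannonMI_le_logb_renyiSum (hP : ∀ p, 0 ≤ P p) (hPsum : ∑ p, P p = 1) {α β : ℝ}
    (hα : 0 < α) (hβ : 0 ≤ β) :
    β * shannonMI P * (1 - α⁻¹) ≤ Real.logb 2 (renyiSum P α β) :=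
  calc β * shannonMI P * (1 - α⁻¹)
      = ∑ y, pY P y * (β / α * ((α - 1) * condMI P y)) := by
        rw [shannonMI_eq hP, Finset.mul_sum, Finset.sum_mul]
        refine Finset.sum_congr rfl fun y _ => ?_
        field_simp
    _ ≤ ∑ y, pY P y * Real.logb 2 (ratioMoment P α y ^ (β / α)) := by
        refine Finset.sum_le_sum fun y _ => ?_
        rcases (pY_nonneg hP y).eq_or_lt with hy | hy
        · simp [← hy]
        rw [Real.logb_rpow_eq_mul_logb_of_pos (ratioMoment_pos hP α hy)]
        exact mul_le_mul_of_nonneg_left (mul_le_mul_of_nonneg_left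
          (mul_condMI_le_logb_ratioMoment hP α hy) (div_nonneg hβ hα.le)) hy.le
    _ ≤ _ := sum_mul_logb_le_logb_sum_mul one_lt_two _ (fun y _ => pY_nonneg hP y)
        (sum_pY hPsum) fun y _ hy => Real.rpow_pos_of_pos (ratioMoment_pos hP α hy) _

theorem ratioMoment_le_rpow (hP : ∀ p, 0 ≤ P p) (α : ℝ) {u : ℝ} (hu₀ : 0 ≤ u) (hu₁ : u ≤ 1)
    {y : 𝓨} (hy : 0 < pY P y) :
    ratioMoment P (1 + u * (α - 1)) y ≤ ratioMoment P α y ^ u :=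
  calc ∑ x, pCond P x y * densityRatio P x y ^ (1 + u * (α - 1) - 1)
      = ∑ x, pCond P x y * (densityRatio P x y ^ (α - 1)) ^ u := by
        refine Finset.sum_congr rfl fun x _ => ?_
        rw [← Real.rpow_mul (densityRatio_nonneg hP x y), add_sub_cancel_left, mul_comm u]
    _ ≤ _ := sum_mul_rpow_le_rpow_sum_mul _ hu₀ hu₁ (fun x _ => pCond_nonneg hP x y)
        (sum_pCond hy.ne') fun x _ => Real.rpow_nonneg (densityRatio_nonneg hP x y) _

theorem renyiSum_le_rpow (hP : ∀ p, 0 ≤ P p) (hPsum : ∑ p, P p = 1) {β s t : ℝ} (hβ : 0 ≤ β)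
    (hs : s < 1) (ht₀ : 0 ≤ t) (ht₁ : t ≤ 1) :
    renyiSum P (1 - t * s)⁻¹ β ≤ renyiSum P (1 - s)⁻¹ β ^ t := by
  have h1s : 0 < 1 - s := sub_pos.2 hs
  have h1ts : 0 < 1 - t * s := by
    rcases ht₁.eq_or_lt with rfl | ht₁
    · linarith
    · nlinarith [mul_nonneg ht₀ h1s.le]
  set u := t * (1 - s) / (1 - t * s) with hu
  have hu₀ : 0 ≤ u := by positivity
  have hu₁ : u ≤ 1 := (div_le_one h1ts).2 (by nlinarith)
  have hα : (1 - t * s)⁻¹ = 1 + u * ((1 - s)⁻¹ - 1) := by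
    rw [hu]
    field_simp
    ring
  have hexp : u * (β / (1 - t * s)⁻¹) = β / (1 - s)⁻¹ * t := by
    rw [hu]
    field_simp
  calc renyiSum P (1 - t * s)⁻¹ β
      ≤ ∑ y, pY P y * (ratioMoment P (1 - s)⁻¹ y ^ (β / (1 - s)⁻¹)) ^ t := by
        refine Finset.sum_le_sum fun y _ => ?_
        rcases (pY_nonneg hP y).eq_or_lt with hy | hy
        · simp [← hy]
        have hS := ratioMoment_nonneg hP (1 - s)⁻¹ y
        have hle := ratioMoment_le_rpow hP (1 - s)⁻¹ hu₀ hu₁ hy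
        rw [← hα] at hle
        refine mul_le_mul_of_nonneg_left ?_ hy.le
        calc ratioMoment P (1 - t * s)⁻¹ y ^ (β / (1 - t * s)⁻¹)
            ≤ (ratioMoment P (1 - s)⁻¹ y ^ u) ^ (β / (1 - t * s)⁻¹) :=
              Real.rpow_le_rpow (ratioMoment_nonneg hP _ y) hle (by positivity)
          _ = _ := by rw [← Real.rpow_mul hS, ← Real.rpow_mul hS, hexp]
    _ ≤ renyiSum P (1 - s)⁻¹ β ^ t :=
        sum_mul_rpow_le_rpow_sum_mul _ ht₀ ht₁ (fun y _ => pY_nonneg hP y) (sum_pY hPsum)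
          fun y _ => Real.rpow_nonneg (ratioMoment_nonneg hP _ y) _

theorem logb_renyiSum_le_mul (hP : ∀ p, 0 ≤ P p) (hPsum : ∑ p, P p = 1) {β s t : ℝ}
    (hβ : 0 ≤ β) (hs : s < 1) (ht₀ : 0 ≤ t) (ht₁ : t ≤ 1) :
    Real.logb 2 (renyiSum P (1 - t * s)⁻¹ β) ≤ t * Real.logb 2 (renyiSum P (1 - s)⁻¹ β) := by
  rw [← Real.logb_rpow_eq_mul_logb_of_pos (renyiSum_pos hP hPsum _ β)]
  exact Real.logb_le_logb_of_le one_lt_two (renyiSum_pos hP hPsum _ β)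
    (renyiSum_le_rpow hP hPsum hβ hs ht₀ ht₁)

end RenyiSum

theorem ItildeE_monotone_in_alpha_general
    (P : 𝓧 × 𝓨 → ℝ) (hP : ∀ p, 0 ≤ P p) (hPsum : ∑ p, P p = 1)
    (β : ℝ) (hβ : 0 < β) :
    ∀ a b : ℝ, 0 < b → b ≤ a → ItildeE P b β ≤ ItildeE P a β := by
  intro a b hb hba
  set f := fun s : ℝ => Real.logb 2 (renyiSum P (1 - s)⁻¹ β)
  have hmono : MonotoneOn (fun s => if s = 0 then β * shannonMI P else f s / s) (Set.Iio 1) :=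
    monotoneOn_slope_of_subhomogeneous
      (fun s hs t ht => logb_renyiSum_le_mul hP hPsum hβ.le hs ht.1.le ht.2.le)
      fun s hs => by
        simpa using mul_shannonMI_le_logb_renyiSum hP hPsum (inv_pos.2 (sub_pos.2 hs)) hβ.le
  have hItildeE {α : ℝ} (hα : 0 < α) :
      ItildeE P α β = (if 1 - α⁻¹ = 0 then β * shannonMI P else f (1 - α⁻¹) / (1 - α⁻¹)) / β := by
    by_cases hα1 : α = 1
    · subst hα1
      simp [ItildeE, hβ.ne']
    have hs : 1 - α⁻¹ ≠ 0 := by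
      rwa [sub_ne_zero, ne_comm, inv_ne_one]
    rw [ItildeE, if_neg hα1, if_neg hs, Itilde_eq hP hα.ne']
    simp only [f, sub_sub_cancel, inv_inv]
    field_simp
  rw [hItildeE hb, hItildeE (hb.trans_le hba)]
  exact div_le_div_of_nonneg_right (hmono (sub_lt_self 1 (inv_pos.2 hb))
    (sub_lt_self 1 (inv_pos.2 (hb.trans_le hba))) (sub_le_sub_left (inv_anti₀ hb hba) 1)) hβ.le

/-- for fixed `β ∈ (0,∞)`, `α ↦ Ĩ_{α,β}(X:Y)` is non-decreasing
on `(0,∞)`. -/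
theorem ItildeE_monotone_in_alpha
    [Nonempty 𝓧] [Nonempty 𝓨]
    (P : 𝓧 × 𝓨 → ℝ) (hP : ∀ p, 0 ≤ P p) (hPsum : ∑ p, P p = 1)
    (β : ℝ) (hβ : 0 < β) :
    ∀ a b : ℝ, 0 < b → b ≤ a → ItildeE P b β ≤ ItildeE P a β :=
  ItildeE_monotone_in_alpha_general P hP hPsum β hβ
end

section
/- Data processing inequality for the two-parameter Rényi mutual information: let P_XYZ be a probability distribution on 𝒳×𝒴×𝒵 such that X−Y−Z forms a Markov chain, i.e. P_XYZ(x,y,z)·P_Y(y) = P_XY(x,y)·P_YZ(y,z) for all (x,y,z), where P_XY, P_YZ, P_Y are the corresponding marginals. If either α, β ∈ (0,1] or α, β ∈ [1,∞), then Ĩ_{α,β}(X:Y)_{P_XY} ≥ Ĩ_{α,β}(X:Z)_{P_XZ}, where P_XZ is the marginal of P_XYZ on 𝒳×𝒵. -/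
open scoped BigOperators

noncomputable section

variable {𝓧 𝓨 : Type*} [Fintype 𝓧] [Fintype 𝓨]

section AuxDPI
open Finset
variable {ι κ : Type*} [Fintype ι] [Fintype κ]

/-- Gibbs' inequality variant. -/
lemma gibbs_aux (p q : ι → ℝ) (hp : ∀ i, 0 ≤ p i) (hq : ∀ i, 0 ≤ q i)
    (hpq : ∀ i, 0 < p i → 0 < q i) (hsum : ∑ i, q i ≤ ∑ i, p i) :
    0 ≤ ∑ i, (if 0 < p i then p i * Real.log (p i / q i) else 0) := by
  have key : ∀ i, p i - q i ≤ (if 0 < p i then p i * Real.log (p i / q i) else 0) := by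
    intro i
    by_cases hi : 0 < p i
    · rw [if_pos hi]
      have hqi := hpq i hi
      have h1 : Real.log (q i / p i) ≤ q i / p i - 1 :=
        Real.log_le_sub_one_of_pos (div_pos hqi hi)
      have h2 : Real.log (p i / q i) = - Real.log (q i / p i) := by
        rw [← Real.log_inv]; congr 1; field_simp
      have h3 : p i * (q i / p i - 1) = q i - p i := by field_simp
      have h4 : p i * Real.log (q i / p i) ≤ q i - p i := by
        calc p i * Real.log (q i / p i) ≤ p i * (q i / p i - 1) :=
              mul_le_mul_of_nonneg_left h1 (hp i)
          _ = q i - p i := h3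
      rw [h2, mul_neg]; linarith
    · have hp0 : p i = 0 := le_antisymm (not_lt.1 hi) (hp i)
      rw [if_neg hi, hp0]
      simpa using hq i
  calc (0:ℝ) ≤ ∑ i, (p i - q i) := by rw [Finset.sum_sub_distrib]; linarith
    _ ≤ _ := Finset.sum_le_sum fun i _ => key i

lemma helper_sum (c : κ → ℝ) (hc : ∀ k, 0 ≤ c k) (w : ι → ℝ)
    (Q : ι → κ → ℝ) (hQ : ∀ i k, 0 ≤ Q i k) {α : ℝ} (hα : 0 < α)
    {T : ℝ} (hTpos : 0 < T) (hT : T = ∑ i, w i * (∑ k', c k' * Q i k' ^ α) ^ α⁻¹) :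
    ∑ k, c k * (∑ i, (w i * (∑ k', c k' * Q i k' ^ α) ^ α⁻¹ / T) *
        ((T / (∑ k', c k' * Q i k' ^ α) ^ α⁻¹) * Q i k) ^ α) = T ^ α := by
  have hF0 : ∀ i, 0 ≤ ∑ k', c k' * Q i k' ^ α := fun i =>
    sum_nonneg fun k _ => mul_nonneg (hc k) (Real.rpow_nonneg (hQ i k) α)
  have hh0 : ∀ i, 0 ≤ (∑ k', c k' * Q i k' ^ α) ^ α⁻¹ := fun i => Real.rpow_nonneg (hF0 i) _
  have swap : ∑ k, c k * (∑ i, (w i * (∑ k', c k' * Q i k' ^ α) ^ α⁻¹ / T) *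
        ((T / (∑ k', c k' * Q i k' ^ α) ^ α⁻¹) * Q i k) ^ α)
      = ∑ i, (w i * (∑ k', c k' * Q i k' ^ α) ^ α⁻¹ / T) *
          (∑ k, c k * ((T / (∑ k', c k' * Q i k' ^ α) ^ α⁻¹) * Q i k) ^ α) := by
    simp only [Finset.mul_sum]
    rw [Finset.sum_comm]
    exact sum_congr rfl fun i _ => sum_congr rfl fun k _ => by ring
  rw [swap]
  have term_eq : ∀ i, (w i * (∑ k', c k' * Q i k' ^ α) ^ α⁻¹ / T) *
          (∑ k, c k * ((T / (∑ k', c k' * Q i k' ^ α) ^ α⁻¹) * Q i k) ^ α)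
      = (w i * (∑ k', c k' * Q i k' ^ α) ^ α⁻¹ / T) * T ^ α := by
    intro i
    by_cases hi : (∑ k', c k' * Q i k' ^ α) ^ α⁻¹ = 0
    · rw [hi]; ring
    · have hFi : 0 < ∑ k', c k' * Q i k' ^ α := by
        rcases (hF0 i).lt_or_eq with h' | h'
        · exact h'
        · exact absurd (by rw [← h', Real.zero_rpow (inv_ne_zero hα.ne')]) hi
      congr 1
      have inner : ∀ k, c k * ((T / (∑ k', c k' * Q i k' ^ α) ^ α⁻¹) * Q i k) ^ α
          = (T / (∑ k', c k' * Q i k' ^ α) ^ α⁻¹) ^ α * (c k * Q i k ^ α) := by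
        intro k
        rw [Real.mul_rpow (div_nonneg hTpos.le (hh0 i)) (hQ i k)]; ring
      rw [Finset.sum_congr rfl fun k _ => inner k, ← Finset.mul_sum,
        Real.div_rpow hTpos.le (hh0 i), Real.rpow_inv_rpow (hF0 i) hα.ne',
        div_mul_cancel₀ _ hFi.ne']
  rw [Finset.sum_congr rfl fun i _ => term_eq i, ← Finset.sum_mul, ← Finset.sum_div, ← hT,
    div_self hTpos.ne', one_mul]

lemma renyi_jensen_concave (c : κ → ℝ) (hc : ∀ k, 0 ≤ c k)
    (w : ι → ℝ) (hw : ∀ i, 0 ≤ w i) (hw1 : ∑ i, w i = 1)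
    (Q : ι → κ → ℝ) (hQ : ∀ i k, 0 ≤ Q i k) {α : ℝ} (hα : 0 < α) (hα1 : α ≤ 1) :
    ∑ i, w i * (∑ k, c k * Q i k ^ α) ^ α⁻¹
      ≤ (∑ k, c k * (∑ i, w i * Q i k) ^ α) ^ α⁻¹ := by
  have hF0 : ∀ i, 0 ≤ ∑ k', c k' * Q i k' ^ α := fun i =>
    sum_nonneg fun k _ => mul_nonneg (hc k) (Real.rpow_nonneg (hQ i k) α)
  have hh0 : ∀ i, 0 ≤ (∑ k', c k' * Q i k' ^ α) ^ α⁻¹ := fun i => Real.rpow_nonneg (hF0 i) _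
  have hQbar0 : ∀ k, 0 ≤ ∑ i, w i * Q i k := fun k =>
    sum_nonneg fun i _ => mul_nonneg (hw i) (hQ i k)
  have hRHS0 : 0 ≤ ∑ k, c k * (∑ i, w i * Q i k) ^ α :=
    sum_nonneg fun k _ => mul_nonneg (hc k) (Real.rpow_nonneg (hQbar0 k) α)
  set T := ∑ i, w i * (∑ k', c k' * Q i k' ^ α) ^ α⁻¹ with hT
  have hT0 : 0 ≤ T := sum_nonneg fun i _ => mul_nonneg (hw i) (hh0 i)
  rcases hT0.lt_or_eq with hTpos | hT0'
  · set u : ι → ℝ := fun i => w i * (∑ k', c k' * Q i k' ^ α) ^ α⁻¹ / T with hu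
    set R : ι → κ → ℝ := fun i k => (T / (∑ k', c k' * Q i k' ^ α) ^ α⁻¹) * Q i k with hR
    have hu0 : ∀ i, 0 ≤ u i := fun i => div_nonneg (mul_nonneg (hw i) (hh0 i)) hT0
    have hu1 : ∑ i, u i = 1 := by rw [hu, ← Finset.sum_div, div_self hTpos.ne']
    have hR0 : ∀ i k, 0 ≤ R i k := fun i k =>
      mul_nonneg (div_nonneg hT0 (hh0 i)) (hQ i k)
    have hpt : ∀ k, ∑ i, u i * R i k ≤ ∑ i, w i * Q i k := by
      intro k
      apply Finset.sum_le_sum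
      intro i _
      by_cases hi : (∑ k', c k' * Q i k' ^ α) ^ α⁻¹ = 0
      · have : u i = 0 := by rw [hu]; simp [hi]
        rw [this, zero_mul]
        exact mul_nonneg (hw i) (hQ i k)
      · have heq : u i * R i k = (w i * Q i k) *
            (((∑ k', c k' * Q i k' ^ α) ^ α⁻¹) / ((∑ k', c k' * Q i k' ^ α) ^ α⁻¹)) * (T / T) := by
          rw [hu, hR]; ring
        rw [heq, div_self hi, div_self hTpos.ne', mul_one, mul_one]
    have hjen : ∀ k, ∑ i, u i * R i k ^ α ≤ (∑ i, u i * R i k) ^ α := by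
      intro k
      have := (Real.concaveOn_rpow hα.le hα1).le_map_sum (t := univ)
        (fun i _ => hu0 i) hu1 (fun i _ => Set.mem_Ici.2 (hR0 i k))
      simpa [smul_eq_mul] using this
    have key : T ^ α ≤ ∑ k, c k * (∑ i, w i * Q i k) ^ α := by
      rw [← helper_sum c hc w Q hQ hα hTpos hT]
      apply Finset.sum_le_sum
      intro k _
      refine mul_le_mul_of_nonneg_left ?_ (hc k)
      exact le_trans (hjen k)
        (Real.rpow_le_rpow (sum_nonneg fun i _ => mul_nonneg (hu0 i) (hR0 i k)) (hpt k) hα.le)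
    calc T = (T ^ α) ^ α⁻¹ := (Real.rpow_rpow_inv hT0 hα.ne').symm
      _ ≤ _ := Real.rpow_le_rpow (Real.rpow_nonneg hT0 α) key (by positivity)
  · rw [← hT0']
    exact Real.rpow_nonneg hRHS0 _

lemma renyi_jensen_convex (c : κ → ℝ) (hc : ∀ k, 0 ≤ c k)
    (w : ι → ℝ) (hw : ∀ i, 0 ≤ w i) (hw1 : ∑ i, w i = 1)
    (Q : ι → κ → ℝ) (hQ : ∀ i k, 0 ≤ Q i k) {α : ℝ} (hα1 : 1 ≤ α) :
    (∑ k, c k * (∑ i, w i * Q i k) ^ α) ^ α⁻¹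
      ≤ ∑ i, w i * (∑ k, c k * Q i k ^ α) ^ α⁻¹ := by
  have hα : (0:ℝ) < α := lt_of_lt_of_le one_pos hα1
  have hF0 : ∀ i, 0 ≤ ∑ k', c k' * Q i k' ^ α := fun i =>
    sum_nonneg fun k _ => mul_nonneg (hc k) (Real.rpow_nonneg (hQ i k) α)
  have hh0 : ∀ i, 0 ≤ (∑ k', c k' * Q i k' ^ α) ^ α⁻¹ := fun i => Real.rpow_nonneg (hF0 i) _
  have hQbar0 : ∀ k, 0 ≤ ∑ i, w i * Q i k := fun k =>
    sum_nonneg fun i _ => mul_nonneg (hw i) (hQ i k)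
  have hvanish : ∀ i k, (∑ k', c k' * Q i k' ^ α) ^ α⁻¹ = 0 → 0 < c k → Q i k = 0 := by
    intro i k hi hck
    have hFi : ∑ k', c k' * Q i k' ^ α = 0 := by
      by_contra hne
      have : 0 < ∑ k', c k' * Q i k' ^ α := (hF0 i).lt_of_ne (Ne.symm hne)
      exact absurd hi (Real.rpow_pos_of_pos this _).ne'
    have := (Finset.sum_eq_zero_iff_of_nonneg
      (fun k' _ => mul_nonneg (hc k') (Real.rpow_nonneg (hQ i k') α))).1 hFi k (mem_univ k)
    have hQk : Q i k ^ α = 0 := by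
      rcases mul_eq_zero.1 this with h' | h'
      · exact absurd h' hck.ne'
      · exact h'
    exact (Real.rpow_eq_zero (hQ i k) hα.ne').1 hQk
  set T := ∑ i, w i * (∑ k', c k' * Q i k' ^ α) ^ α⁻¹ with hT
  have hT0 : 0 ≤ T := sum_nonneg fun i _ => mul_nonneg (hw i) (hh0 i)
  rcases hT0.lt_or_eq with hTpos | hT0'
  · set u : ι → ℝ := fun i => w i * (∑ k', c k' * Q i k' ^ α) ^ α⁻¹ / T with hu
    set R : ι → κ → ℝ := fun i k => (T / (∑ k', c k' * Q i k' ^ α) ^ α⁻¹) * Q i k with hR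
    have hu0 : ∀ i, 0 ≤ u i := fun i => div_nonneg (mul_nonneg (hw i) (hh0 i)) hT0
    have hu1 : ∑ i, u i = 1 := by rw [hu, ← Finset.sum_div, div_self hTpos.ne']
    have hR0 : ∀ i k, 0 ≤ R i k := fun i k =>
      mul_nonneg (div_nonneg hT0 (hh0 i)) (hQ i k)
    have hpt : ∀ k, 0 < c k → ∑ i, w i * Q i k = ∑ i, u i * R i k := by
      intro k hck
      apply Finset.sum_congr rfl
      intro i _
      by_cases hi : (∑ k', c k' * Q i k' ^ α) ^ α⁻¹ = 0
      · have h1 : u i = 0 := by rw [hu]; simp [hi]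
        have h2 : Q i k = 0 := hvanish i k hi hck
        rw [h1, h2]; ring
      · have heq : u i * R i k = (w i * Q i k) *
            (((∑ k', c k' * Q i k' ^ α) ^ α⁻¹) / ((∑ k', c k' * Q i k' ^ α) ^ α⁻¹)) * (T / T) := by
          rw [hu, hR]; ring
        rw [heq, div_self hi, div_self hTpos.ne', mul_one, mul_one]
    have hjen : ∀ k, (∑ i, u i * R i k) ^ α ≤ ∑ i, u i * R i k ^ α := by
      intro k
      have := (convexOn_rpow hα1).map_sum_le (t := univ)
        (fun i _ => hu0 i) hu1 (fun i _ => Set.mem_Ici.2 (hR0 i k))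
      simpa [smul_eq_mul] using this
    have key : ∑ k, c k * (∑ i, w i * Q i k) ^ α ≤ T ^ α := by
      rw [← helper_sum c hc w Q hQ hα hTpos hT]
      apply Finset.sum_le_sum
      intro k _
      rcases (hc k).lt_or_eq with hck | hck
      · rw [hpt k hck]
        exact mul_le_mul_of_nonneg_left (hjen k) (hc k)
      · rw [← hck]; simp
    calc (∑ k, c k * (∑ i, w i * Q i k) ^ α) ^ α⁻¹
        ≤ (T ^ α) ^ α⁻¹ := Real.rpow_le_rpow
          (sum_nonneg fun k _ => mul_nonneg (hc k) (Real.rpow_nonneg (hQbar0 k) α)) key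
          (by positivity)
      _ = T := Real.rpow_rpow_inv hT0 hα.ne'
  · rw [← hT0']
    have hwh : ∀ i, w i * (∑ k', c k' * Q i k' ^ α) ^ α⁻¹ = 0 := by
      intro i
      exact (Finset.sum_eq_zero_iff_of_nonneg
        (fun i _ => mul_nonneg (hw i) (hh0 i))).1 hT0'.symm i (mem_univ i)
    have hQbar : ∀ k, c k * (∑ i, w i * Q i k) ^ α = 0 := by
      intro k
      rcases (hc k).lt_or_eq with hck | hck
      · have : ∑ i, w i * Q i k = 0 := by
          apply Finset.sum_eq_zero
          intro i _
          rcases mul_eq_zero.1 (hwh i) with h' | h'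
          · rw [h', zero_mul]
          · rw [hvanish i k h' hck, mul_zero]
        rw [this, Real.zero_rpow hα.ne', mul_zero]
      · rw [← hck, zero_mul]
    rw [Finset.sum_eq_zero fun k _ => hQbar k, Real.zero_rpow (inv_ne_zero hα.ne')]

end AuxDPI

/-- data processing inequality for the two-parameter Rényi mutual
information: if `X−Y−Z` is a Markov chain, then for `α, β ∈ (0,1]` or
`α, β ∈ [1,∞)`, `Ĩ_{α,β}(X:Y) ≥ Ĩ_{α,β}(X:Z)`. -/
theorem ItildeE_data_processing
    {𝓩 : Type*} [Fintype 𝓩] [Nonempty 𝓧] [Nonempty 𝓨] [Nonempty 𝓩]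
    (P : 𝓧 × 𝓨 × 𝓩 → ℝ) (hP : ∀ p, 0 ≤ P p) (hPsum : ∑ p, P p = 1)
    (hMarkov : ∀ (x : 𝓧) (y : 𝓨) (z : 𝓩),
      P (x, y, z) * (∑ x', ∑ z', P (x', y, z')) =
        (∑ z', P (x, y, z')) * (∑ x', P (x', y, z)))
    (α β : ℝ)
    (h : (0 < α ∧ α ≤ 1 ∧ 0 < β ∧ β ≤ 1) ∨ (1 ≤ α ∧ 1 ≤ β)) :
    ItildeE (fun q : 𝓧 × 𝓨 => ∑ z, P (q.1, q.2, z)) α β ≥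
      ItildeE (fun q : 𝓧 × 𝓩 => ∑ y, P (q.1, y, q.2)) α β := by
  classical
  rw [ge_iff_le]
  set A : 𝓧 × 𝓨 → ℝ := fun q => ∑ z, P (q.1, q.2, z) with hA
  set B : 𝓧 × 𝓩 → ℝ := fun q => ∑ y, P (q.1, y, q.2) with hB
  have hA0 : ∀ q, 0 ≤ A q := fun q => Finset.sum_nonneg fun z _ => hP _
  have hB0 : ∀ q, 0 ≤ B q := fun q => Finset.sum_nonneg fun y _ => hP _
  have hpXA0 : ∀ x, 0 ≤ pX A x := fun x => Finset.sum_nonneg fun y _ => hA0 _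
  have hpYA0 : ∀ y, 0 ≤ pY A y := fun y => Finset.sum_nonneg fun x _ => hA0 _
  have hpYB0 : ∀ z, 0 ≤ pY B z := fun z => Finset.sum_nonneg fun x _ => hB0 _
  have hXeq : ∀ x, pX B x = pX A x := by
    intro x
    simp only [pX, hA, hB]
    exact Finset.sum_comm
  set W : 𝓨 → 𝓩 → ℝ := fun y z => ∑ x, P (x, y, z) with hW
  have hW0 : ∀ y z, 0 ≤ W y z := fun y z => Finset.sum_nonneg fun x _ => hP _
  have hWsumz : ∀ y, ∑ z, W y z = pY A y := by
    intro y; simp only [hW, pY, hA]; exact Finset.sum_comm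
  have hWsumy : ∀ z, ∑ y, W y z = pY B z := by
    intro z; simp only [hW, pY, hB]; exact Finset.sum_comm
  have hPleW : ∀ x y z, P (x,y,z) ≤ W y z := by
    intro x y z
    simp only [hW]
    exact Finset.single_le_sum (f := fun x' => P (x', y, z)) (fun x' _ => hP _) (Finset.mem_univ x)
  have hPleA : ∀ x y z, P (x,y,z) ≤ A (x,y) := by
    intro x y z
    simp only [hA]
    exact Finset.single_le_sum (f := fun z' => P (x, y, z')) (fun z' _ => hP _) (Finset.mem_univ z)
  have hPleB : ∀ x y z, P (x,y,z) ≤ B (x,z) := by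
    intro x y z
    simp only [hB]
    exact Finset.single_le_sum (f := fun y' => P (x, y', z)) (fun y' _ => hP _) (Finset.mem_univ y)
  have hAleY : ∀ x y, A (x,y) ≤ pY A y := by
    intro x y
    exact Finset.single_le_sum (f := fun x' => A (x', y)) (fun x' _ => hA0 _) (Finset.mem_univ x)
  have hAleX : ∀ x y, A (x,y) ≤ pX A x := by
    intro x y
    exact Finset.single_le_sum (f := fun y' => A (x, y')) (fun y' _ => hA0 _) (Finset.mem_univ y)
  have hBleY : ∀ x z, B (x,z) ≤ pY B z := by
    intro x z
    exact Finset.single_le_sum (f := fun x' => B (x', z)) (fun x' _ => hB0 _) (Finset.mem_univ x)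
  have hBleX : ∀ x z, B (x,z) ≤ pX B x := by
    intro x z
    exact Finset.single_le_sum (f := fun z' => B (x, z')) (fun z' _ => hB0 _) (Finset.mem_univ z)
  have hWleY : ∀ y z, W y z ≤ pY B z := by
    intro y z
    rw [← hWsumy z]
    exact Finset.single_le_sum (f := fun y' => W y' z) (fun y' _ => hW0 _ _) (Finset.mem_univ y)
  have hMark : ∀ x y z, P (x,y,z) * pY A y = A (x,y) * W y z := by
    intro x y z
    simp only [pY, hA, hW]
    exact hMarkov x y z
  have hYA0A : ∀ y, pY A y = 0 → ∀ x, A (x,y) = 0 := fun y hy x =>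
    le_antisymm ((hAleY x y).trans_eq hy) (hA0 _)
  have hYA0P : ∀ y, pY A y = 0 → ∀ x z, P (x,y,z) = 0 := fun y hy x z =>
    le_antisymm ((hPleA x y z).trans ((hAleY x y).trans_eq hy)) (hP _)
  have hKey : ∀ x z, B (x,z) = ∑ y, W y z * pCond A x y := by
    intro x z
    have hBxz : B (x, z) = ∑ y, P (x, y, z) := by simp [hB]
    rw [hBxz]
    refine Finset.sum_congr rfl fun y _ => ?_
    rcases (hpYA0 y).lt_or_eq with hy | hy
    · rw [pCond, ← mul_div_assoc, eq_div_iff hy.ne']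
      linear_combination hMark x y z
    · rw [hYA0P y hy.symm x z, pCond, hYA0A y hy.symm x, zero_div, mul_zero]
  have h1 : ∑ x, ∑ y, ∑ z, P (x, y, z) = 1 := by
    have := hPsum
    simp only [Fintype.sum_prod_type] at this
    exact this
  have hsumYA : ∑ y, pY A y = 1 := by
    simp only [pY, hA]
    rw [Finset.sum_comm]
    exact h1
  have hsumYB : ∑ z, pY B z = 1 := by
    simp only [pY, hB]
    rw [Finset.sum_comm]
    rw [← h1]
    exact Finset.sum_congr rfl fun x _ => Finset.sum_comm
  have hyex : ∃ y, 0 < pY A y := by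
    by_contra hno
    push_neg at hno
    have : ∑ y, pY A y = 0 := Finset.sum_eq_zero fun y _ => le_antisymm (hno y) (hpYA0 y)
    rw [hsumYA] at this
    norm_num at this
  have hzex : ∃ z, 0 < pY B z := by
    by_contra hno
    push_neg at hno
    have : ∑ z, pY B z = 0 := Finset.sum_eq_zero fun z _ => le_antisymm (hno z) (hpYB0 z)
    rw [hsumYB] at this
    norm_num at this
  have hQA0 : ∀ x y, 0 ≤ pCond A x y := fun x y => div_nonneg (hA0 _) (hpYA0 y)
  have hQB0 : ∀ x z, 0 ≤ pCond B x z := fun x z => div_nonneg (hB0 _) (hpYB0 z)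
  by_cases hα1 : α = 1
  · -- Shannon case
    rw [ItildeE, ItildeE, if_pos hα1, if_pos hα1]
    have expandA : shannonMI A = ∑ x, ∑ y, ∑ z,
        (if 0 < P (x,y,z) then P (x,y,z) * Real.logb 2 (pCond A x y / pX A x) else 0) := by
      rw [shannonMI, Fintype.sum_prod_type]
      refine Finset.sum_congr rfl fun x _ => Finset.sum_congr rfl fun y _ => ?_
      by_cases hAxy : 0 < A (x, y)
      · rw [if_pos hAxy]
        have hterm : ∀ z, (if 0 < P (x,y,z) then
              P (x,y,z) * Real.logb 2 (pCond A x y / pX A x) else 0)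
            = P (x,y,z) * Real.logb 2 (pCond A x y / pX A x) := by
          intro z
          rcases (hP (x,y,z)).lt_or_eq with hp | hp
          · rw [if_pos hp]
          · rw [if_neg (by rw [← hp]; exact lt_irrefl 0), ← hp, zero_mul]
        rw [Finset.sum_congr rfl fun z _ => hterm z, ← Finset.sum_mul]
      · have h0 : A (x, y) = 0 := le_antisymm (not_lt.1 hAxy) (hA0 _)
        have hz0 : ∀ z, P (x,y,z) = 0 := fun z =>
          le_antisymm ((hPleA x y z).trans h0.le) (hP _)
        rw [if_neg hAxy]
        symm
        refine Finset.sum_eq_zero fun z _ => ?_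
        rw [if_neg (by rw [hz0 z]; exact lt_irrefl 0)]
    have expandB : shannonMI B = ∑ x, ∑ y, ∑ z,
        (if 0 < P (x,y,z) then P (x,y,z) * Real.logb 2 (pCond B x z / pX B x) else 0) := by
      rw [shannonMI, Fintype.sum_prod_type]
      have e : ∀ x, ∑ z, (if 0 < B (x, z) then
            B (x, z) * Real.logb 2 (pCond B x z / pX B x) else 0)
          = ∑ z, ∑ y, (if 0 < P (x,y,z) then
              P (x,y,z) * Real.logb 2 (pCond B x z / pX B x) else 0) := by
        intro x
        refine Finset.sum_congr rfl fun z _ => ?_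
        by_cases hBxz : 0 < B (x, z)
        · rw [if_pos hBxz]
          have hterm : ∀ y, (if 0 < P (x,y,z) then
                P (x,y,z) * Real.logb 2 (pCond B x z / pX B x) else 0)
              = P (x,y,z) * Real.logb 2 (pCond B x z / pX B x) := by
            intro y
            rcases (hP (x,y,z)).lt_or_eq with hp | hp
            · rw [if_pos hp]
            · rw [if_neg (by rw [← hp]; exact lt_irrefl 0), ← hp, zero_mul]
          rw [Finset.sum_congr rfl fun y _ => hterm y, ← Finset.sum_mul]
        · have h0 : B (x, z) = 0 := le_antisymm (not_lt.1 hBxz) (hB0 _)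
          have hy0 : ∀ y, P (x,y,z) = 0 := fun y =>
            le_antisymm ((hPleB x y z).trans h0.le) (hP _)
          rw [if_neg hBxz]
          symm
          refine Finset.sum_eq_zero fun y _ => ?_
          rw [if_neg (by rw [hy0 y]; exact lt_irrefl 0)]
      refine Finset.sum_congr rfl fun x _ => ?_
      rw [e x]
      exact Finset.sum_comm
    rw [← sub_nonneg, expandA, expandB]
    have hdiffterm : ∀ x y z,
        (if 0 < P (x,y,z) then P (x,y,z) * Real.logb 2 (pCond A x y / pX A x) else 0)
        - (if 0 < P (x,y,z) then P (x,y,z) * Real.logb 2 (pCond B x z / pX B x) else 0)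
        = (if 0 < P (x,y,z) then
            P (x,y,z) * Real.log (pCond A x y / pCond B x z) else 0) / Real.log 2 := by
      intro x y z
      by_cases hp : 0 < P (x,y,z)
      · rw [if_pos hp, if_pos hp, if_pos hp]
        have hAxy : 0 < A (x,y) := lt_of_lt_of_le hp (hPleA x y z)
        have hyA : 0 < pY A y := lt_of_lt_of_le hAxy (hAleY x y)
        have ha : 0 < pCond A x y := div_pos hAxy hyA
        have hBxz : 0 < B (x,z) := lt_of_lt_of_le hp (hPleB x y z)
        have hzB : 0 < pY B z := lt_of_lt_of_le hBxz (hBleY x z)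
        have hb : 0 < pCond B x z := div_pos hBxz hzB
        have hm : 0 < pX A x := lt_of_lt_of_le hAxy (hAleX x y)
        rw [hXeq x, Real.logb, Real.logb,
          Real.log_div ha.ne' hm.ne', Real.log_div hb.ne' hm.ne',
          Real.log_div ha.ne' hb.ne']
        ring
      · rw [if_neg hp, if_neg hp, if_neg hp, sub_zero, zero_div]
    have step : (∑ x, ∑ y, ∑ z,
          (if 0 < P (x,y,z) then P (x,y,z) * Real.logb 2 (pCond A x y / pX A x) else 0))
        - (∑ x, ∑ y, ∑ z,
          (if 0 < P (x,y,z) then P (x,y,z) * Real.logb 2 (pCond B x z / pX B x) else 0))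
        = (∑ x, ∑ y, ∑ z, (if 0 < P (x,y,z) then
            P (x,y,z) * Real.log (pCond A x y / pCond B x z) else 0)) / Real.log 2 := by
      rw [Finset.sum_div, ← Finset.sum_sub_distrib]
      refine Finset.sum_congr rfl fun x _ => ?_
      rw [Finset.sum_div, ← Finset.sum_sub_distrib]
      refine Finset.sum_congr rfl fun y _ => ?_
      rw [Finset.sum_div, ← Finset.sum_sub_distrib]
      exact Finset.sum_congr rfl fun z _ => hdiffterm x y z
    rw [step]
    apply div_nonneg _ (Real.log_nonneg one_le_two)
    have reorder : ∑ x, ∑ y, ∑ z, (if 0 < P (x,y,z) then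
          P (x,y,z) * Real.log (pCond A x y / pCond B x z) else 0)
        = ∑ z, ∑ x, ∑ y, (if 0 < P (x,y,z) then
          P (x,y,z) * Real.log (pCond A x y / pCond B x z) else 0) := by
      calc ∑ x, ∑ y, ∑ z, (if 0 < P (x,y,z) then
              P (x,y,z) * Real.log (pCond A x y / pCond B x z) else 0)
          = ∑ x, ∑ z, ∑ y, (if 0 < P (x,y,z) then
              P (x,y,z) * Real.log (pCond A x y / pCond B x z) else 0) :=
            Finset.sum_congr rfl fun x _ => Finset.sum_comm
        _ = ∑ z, ∑ x, ∑ y, (if 0 < P (x,y,z) then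
              P (x,y,z) * Real.log (pCond A x y / pCond B x z) else 0) :=
            Finset.sum_comm
    rw [reorder]
    refine Finset.sum_nonneg fun z _ => ?_
    have hsumq : ∑ i : 𝓧 × 𝓨, W i.2 z * pCond B i.1 z
        ≤ ∑ i : 𝓧 × 𝓨, P (i.1, i.2, z) := by
      rw [Fintype.sum_prod_type, Fintype.sum_prod_type]
      have hL : ∀ x, ∑ y, W y z * pCond B x z = pY B z * pCond B x z := by
        intro x
        rw [← Finset.sum_mul, hWsumy z]
      have hR : ∑ x, ∑ y, P (x, y, z) = pY B z := by
        simp [pY, hB]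
      rw [Finset.sum_congr rfl fun x _ => hL x, hR, ← Finset.mul_sum]
      rcases (hpYB0 z).lt_or_eq with hz | hz
      · have hone : ∑ x, pCond B x z = 1 := by
          simp only [pCond]
          rw [← Finset.sum_div, show ∑ x, B (x, z) = pY B z from rfl, div_self hz.ne']
        rw [hone, mul_one]
      · rw [← hz, zero_mul]
    have hgibbs := gibbs_aux (ι := 𝓧 × 𝓨)
      (fun i => P (i.1, i.2, z)) (fun i => W i.2 z * pCond B i.1 z)
      (fun i => hP _) (fun i => mul_nonneg (hW0 _ _) (hQB0 _ _))
      (fun i hp => mul_pos (lt_of_lt_of_le hp (hPleW _ _ _))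
        (div_pos (lt_of_lt_of_le hp (hPleB _ _ _))
          (lt_of_lt_of_le (lt_of_lt_of_le hp (hPleB _ _ _)) (hBleY _ _))))
      hsumq
    have hconv : ∑ i : 𝓧 × 𝓨, (if 0 < P (i.1, i.2, z) then
          P (i.1,i.2,z) * Real.log (P (i.1,i.2,z) / (W i.2 z * pCond B i.1 z)) else 0)
        = ∑ x, ∑ y, (if 0 < P (x,y,z) then
          P (x,y,z) * Real.log (pCond A x y / pCond B x z) else 0) := by
      rw [Fintype.sum_prod_type]
      refine Finset.sum_congr rfl fun x _ => Finset.sum_congr rfl fun y _ => ?_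
      by_cases hp : 0 < P (x,y,z)
      · rw [if_pos hp, if_pos hp]
        have hw : 0 < W y z := lt_of_lt_of_le hp (hPleW x y z)
        have hyA : 0 < pY A y :=
          lt_of_lt_of_le (lt_of_lt_of_le hp (hPleA x y z)) (hAleY x y)
        have hcondA : pCond A x y = P (x,y,z) / W y z := by
          rw [pCond, div_eq_div_iff hyA.ne' hw.ne']
          linear_combination (hMark x y z).symm
        rw [hcondA, div_div]
      · rw [if_neg hp, if_neg hp]
    rw [← hconv]
    exact hgibbs
  · -- Rényi case
    have hαpos : 0 < α := by rcases h with ⟨h', _⟩ | ⟨h', _⟩; exact h'; linarith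
    have hβpos : 0 < β := by rcases h with ⟨_, _, h', _⟩ | ⟨_, h'⟩; exact h'; linarith
    rw [ItildeE, ItildeE, if_neg hα1, if_neg hα1, Itilde, Itilde]
    set c : 𝓧 → ℝ := fun x => if 0 < pX A x then pX A x ^ (1 - α) else 0 with hc
    have hc0 : ∀ x, 0 ≤ c x := by
      intro x
      by_cases hx : 0 < pX A x <;> simp [hc, hx, Real.rpow_nonneg (hpXA0 x)]
    have hinnerA : ∀ y, (∑ x, if 0 < pX A x then pX A x ^ (1-α) * pCond A x y ^ α else 0)
        = ∑ x, c x * pCond A x y ^ α := by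
      intro y
      refine Finset.sum_congr rfl fun x _ => ?_
      by_cases hx : 0 < pX A x <;> simp [hc, hx]
    have hinnerB : ∀ z, (∑ x, if 0 < pX B x then pX B x ^ (1-α) * pCond B x z ^ α else 0)
        = ∑ x, c x * pCond B x z ^ α := by
      intro z
      refine Finset.sum_congr rfl fun x _ => ?_
      rw [hXeq x]
      by_cases hx : 0 < pX A x <;> simp [hc, hx]
    simp only [hinnerA, hinnerB]
    have hFA0 : ∀ y, 0 ≤ ∑ x, c x * pCond A x y ^ α := fun y =>
      Finset.sum_nonneg fun x _ => mul_nonneg (hc0 x) (Real.rpow_nonneg (hQA0 x y) α)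
    have hFB0 : ∀ z, 0 ≤ ∑ x, c x * pCond B x z ^ α := fun z =>
      Finset.sum_nonneg fun x _ => mul_nonneg (hc0 x) (Real.rpow_nonneg (hQB0 x z) α)
    set SA := ∑ y, if 0 < pY A y then pY A y * (∑ x, c x * pCond A x y ^ α) ^ (β/α) else 0
      with hSA
    set SB := ∑ z, if 0 < pY B z then pY B z * (∑ x, c x * pCond B x z ^ α) ^ (β/α) else 0
      with hSB
    have hSA0 : ∀ y, (0:ℝ) ≤ if 0 < pY A y then
        pY A y * (∑ x, c x * pCond A x y ^ α) ^ (β/α) else 0 := by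
      intro y
      split
      · exact mul_nonneg (hpYA0 y) (Real.rpow_nonneg (hFA0 y) _)
      · exact le_rfl
    have hSB0 : ∀ z, (0:ℝ) ≤ if 0 < pY B z then
        pY B z * (∑ x, c x * pCond B x z ^ α) ^ (β/α) else 0 := by
      intro z
      split
      · exact mul_nonneg (hpYB0 z) (Real.rpow_nonneg (hFB0 z) _)
      · exact le_rfl
    have hSApos : 0 < SA := by
      obtain ⟨y0, hy0⟩ := hyex
      have hax : ∃ x0, 0 < A (x0, y0) := by
        by_contra hno
        push_neg at hno
        have h0 : pY A y0 = 0 := by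
          rw [pY]
          exact Finset.sum_eq_zero fun x _ => le_antisymm (hno x) (hA0 _)
        rw [h0] at hy0
        exact lt_irrefl 0 hy0
      obtain ⟨x0, hax⟩ := hax
      have hx0 : 0 < pX A x0 := lt_of_lt_of_le hax (hAleX x0 y0)
      have hcond : 0 < pCond A x0 y0 := div_pos hax hy0
      have hFpos : 0 < ∑ x, c x * pCond A x y0 ^ α := by
        refine Finset.sum_pos'
          (fun x _ => mul_nonneg (hc0 x) (Real.rpow_nonneg (hQA0 x y0) α))
          ⟨x0, Finset.mem_univ x0, ?_⟩
        have hcx0 : c x0 = pX A x0 ^ (1-α) := by rw [hc]; simp [hx0]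
        rw [hcx0]
        exact mul_pos (Real.rpow_pos_of_pos hx0 _) (Real.rpow_pos_of_pos hcond _)
      rw [hSA]
      refine Finset.sum_pos' (fun y _ => hSA0 y) ⟨y0, Finset.mem_univ y0, ?_⟩
      rw [if_pos hy0]
      exact mul_pos hy0 (Real.rpow_pos_of_pos hFpos _)
    have hSBpos : 0 < SB := by
      obtain ⟨z0, hz0⟩ := hzex
      have hbx : ∃ x0, 0 < B (x0, z0) := by
        by_contra hno
        push_neg at hno
        have h0 : pY B z0 = 0 := by
          rw [pY]
          exact Finset.sum_eq_zero fun x _ => le_antisymm (hno x) (hB0 _)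
        rw [h0] at hz0
        exact lt_irrefl 0 hz0
      obtain ⟨x0, hbx⟩ := hbx
      have hx0 : 0 < pX A x0 := by
        rw [← hXeq x0]
        exact lt_of_lt_of_le hbx (hBleX x0 z0)
      have hcond : 0 < pCond B x0 z0 := div_pos hbx hz0
      have hFpos : 0 < ∑ x, c x * pCond B x z0 ^ α := by
        refine Finset.sum_pos'
          (fun x _ => mul_nonneg (hc0 x) (Real.rpow_nonneg (hQB0 x z0) α))
          ⟨x0, Finset.mem_univ x0, ?_⟩
        have hcx0 : c x0 = pX A x0 ^ (1-α) := by rw [hc]; simp [hx0]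
        rw [hcx0]
        exact mul_pos (Real.rpow_pos_of_pos hx0 _) (Real.rpow_pos_of_pos hcond _)
      rw [hSB]
      refine Finset.sum_pos' (fun z _ => hSB0 z) ⟨z0, Finset.mem_univ z0, ?_⟩
      rw [if_pos hz0]
      exact mul_pos hz0 (Real.rpow_pos_of_pos hFpos _)
    have hg : ∀ (X:ℝ), 0 ≤ X → X ^ (β/α) = (X ^ α⁻¹) ^ β := by
      intro X hX
      rw [← Real.rpow_mul hX]
      congr 1
      rw [div_eq_mul_inv, mul_comm]
    have hcondB : ∀ z, 0 < pY B z → ∀ x,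
        pCond B x z = ∑ y, (W y z / pY B z) * pCond A x y := by
      intro z hz x
      rw [pCond, hKey x z, Finset.sum_div]
      exact Finset.sum_congr rfl fun y _ => (div_mul_eq_mul_div _ _ _).symm
    have e1 : SA = ∑ y, pY A y * ((∑ x, c x * pCond A x y ^ α) ^ (β/α)) := by
      rw [hSA]
      refine Finset.sum_congr rfl fun y _ => ?_
      rcases (hpYA0 y).lt_or_eq with hy | hy
      · rw [if_pos hy]
      · rw [if_neg (by rw [← hy]; exact lt_irrefl 0), ← hy, zero_mul]
    have e2 : ∑ y, pY A y * ((∑ x, c x * pCond A x y ^ α) ^ (β/α))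
        = ∑ z, ∑ y, W y z * ((∑ x, c x * pCond A x y ^ α) ^ (β/α)) := by
      rw [Finset.sum_comm]
      refine Finset.sum_congr rfl fun y _ => ?_
      rw [← Finset.sum_mul, hWsumz y]
    rcases h with ⟨_, hαle, _, hβle⟩ | ⟨hαge, hβge⟩
    · -- concave case : 0 < α ≤ 1, 0 < β ≤ 1
      have hstep : ∀ z, 0 < pY B z →
          ∑ y, W y z * ((∑ x, c x * pCond A x y ^ α) ^ (β/α))
            ≤ pY B z * ((∑ x, c x * pCond B x z ^ α) ^ (β/α)) := by
        intro z hz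
        have hw0 : ∀ y, 0 ≤ W y z / pY B z := fun y => div_nonneg (hW0 y z) hz.le
        have hw1 : ∑ y, W y z / pY B z = 1 := by
          rw [← Finset.sum_div, hWsumy z, div_self hz.ne']
        have hjen := renyi_jensen_concave c hc0 (fun y => W y z / pY B z) hw0 hw1
          (fun y x => pCond A x y) (fun y x => hQA0 x y) hαpos hαle
        rw [show (∑ x, c x * (∑ y, (W y z / pY B z) * pCond A x y) ^ α)
            = ∑ x, c x * pCond B x z ^ α from
          Finset.sum_congr rfl fun x _ => by rw [← hcondB z hz x]] at hjen
        have h3 : ∑ y, (W y z / pY B z) * ((∑ x, c x * pCond A x y ^ α) ^ α⁻¹) ^ β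
            ≤ (∑ y, (W y z / pY B z) * (∑ x, c x * pCond A x y ^ α) ^ α⁻¹) ^ β := by
          have := (Real.concaveOn_rpow hβpos.le hβle).le_map_sum (t := Finset.univ)
            (w := fun y => W y z / pY B z)
            (p := fun y => (∑ x, c x * pCond A x y ^ α) ^ α⁻¹)
            (fun y _ => hw0 y) hw1
            (fun y _ => Set.mem_Ici.2 (Real.rpow_nonneg (hFA0 y) _))
          simpa [smul_eq_mul] using this
        have h2 : (∑ y, (W y z / pY B z) * (∑ x, c x * pCond A x y ^ α) ^ α⁻¹) ^ β
            ≤ ((∑ x, c x * pCond B x z ^ α) ^ α⁻¹) ^ β :=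
          Real.rpow_le_rpow (Finset.sum_nonneg fun y _ =>
            mul_nonneg (hw0 y) (Real.rpow_nonneg (hFA0 y) _)) hjen hβpos.le
        have h4 : ∑ y, (W y z / pY B z) * ((∑ x, c x * pCond A x y ^ α) ^ (β/α))
            ≤ (∑ x, c x * pCond B x z ^ α) ^ (β/α) := by
          rw [hg _ (hFB0 z)]
          calc ∑ y, (W y z / pY B z) * ((∑ x, c x * pCond A x y ^ α) ^ (β/α))
              = ∑ y, (W y z / pY B z) * ((∑ x, c x * pCond A x y ^ α) ^ α⁻¹) ^ β :=
                Finset.sum_congr rfl fun y _ => by rw [hg _ (hFA0 y)]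
            _ ≤ _ := le_trans h3 h2
        calc ∑ y, W y z * ((∑ x, c x * pCond A x y ^ α) ^ (β/α))
            = ∑ y, pY B z * ((W y z / pY B z) * ((∑ x, c x * pCond A x y ^ α) ^ (β/α))) := by
              refine Finset.sum_congr rfl fun y _ => ?_
              have : pY B z * ((W y z / pY B z) * ((∑ x, c x * pCond A x y ^ α) ^ (β/α)))
                  = (W y z / pY B z * pY B z) * ((∑ x, c x * pCond A x y ^ α) ^ (β/α)) := by
                ring
              rw [this, div_mul_cancel₀ _ hz.ne']
          _ = pY B z * ∑ y, (W y z / pY B z) * ((∑ x, c x * pCond A x y ^ α) ^ (β/α)) :=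
              (Finset.mul_sum _ _ _).symm
          _ ≤ _ := mul_le_mul_of_nonneg_left h4 hz.le
      have hcomp : SA ≤ SB := by
        rw [e1, e2, hSB]
        refine Finset.sum_le_sum fun z _ => ?_
        rcases (hpYB0 z).lt_or_eq with hz | hz
        · rw [if_pos hz]
          exact hstep z hz
        · rw [if_neg (by rw [← hz]; exact lt_irrefl 0)]
          have hWz : ∀ y, W y z = 0 := fun y =>
            le_antisymm ((hWleY y z).trans_eq hz.symm) (hW0 y z)
          exact le_of_eq (Finset.sum_eq_zero fun y _ => by rw [hWz y, zero_mul])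
      have hcoef : α / (β * (α - 1)) ≤ 0 := by
        apply le_of_lt
        apply div_neg_of_pos_of_neg hαpos
        exact mul_neg_of_pos_of_neg hβpos (by
          have := lt_of_le_of_ne hαle hα1
          linarith)
      exact mul_le_mul_of_nonpos_left
        (Real.logb_le_logb_of_le one_lt_two hSApos hcomp) hcoef
    · -- convex case : 1 ≤ α, 1 ≤ β
      have hstep : ∀ z, 0 < pY B z →
          pY B z * ((∑ x, c x * pCond B x z ^ α) ^ (β/α))
            ≤ ∑ y, W y z * ((∑ x, c x * pCond A x y ^ α) ^ (β/α)) := by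
        intro z hz
        have hw0 : ∀ y, 0 ≤ W y z / pY B z := fun y => div_nonneg (hW0 y z) hz.le
        have hw1 : ∑ y, W y z / pY B z = 1 := by
          rw [← Finset.sum_div, hWsumy z, div_self hz.ne']
        have hjen := renyi_jensen_convex c hc0 (fun y => W y z / pY B z) hw0 hw1
          (fun y x => pCond A x y) (fun y x => hQA0 x y) hαge
        rw [show (∑ x, c x * (∑ y, (W y z / pY B z) * pCond A x y) ^ α)
            = ∑ x, c x * pCond B x z ^ α from
          Finset.sum_congr rfl fun x _ => by rw [← hcondB z hz x]] at hjen
        have h3 : (∑ y, (W y z / pY B z) * (∑ x, c x * pCond A x y ^ α) ^ α⁻¹) ^ β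
            ≤ ∑ y, (W y z / pY B z) * ((∑ x, c x * pCond A x y ^ α) ^ α⁻¹) ^ β := by
          have := (convexOn_rpow hβge).map_sum_le (t := Finset.univ)
            (w := fun y => W y z / pY B z)
            (p := fun y => (∑ x, c x * pCond A x y ^ α) ^ α⁻¹)
            (fun y _ => hw0 y) hw1
            (fun y _ => Set.mem_Ici.2 (Real.rpow_nonneg (hFA0 y) _))
          simpa [smul_eq_mul] using this
        have h2 : ((∑ x, c x * pCond B x z ^ α) ^ α⁻¹) ^ β
            ≤ (∑ y, (W y z / pY B z) * (∑ x, c x * pCond A x y ^ α) ^ α⁻¹) ^ β :=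
          Real.rpow_le_rpow (Real.rpow_nonneg (hFB0 z) _) hjen (by linarith)
        have h4 : (∑ x, c x * pCond B x z ^ α) ^ (β/α)
            ≤ ∑ y, (W y z / pY B z) * ((∑ x, c x * pCond A x y ^ α) ^ (β/α)) := by
          rw [hg _ (hFB0 z)]
          calc ((∑ x, c x * pCond B x z ^ α) ^ α⁻¹) ^ β
              ≤ ∑ y, (W y z / pY B z) * ((∑ x, c x * pCond A x y ^ α) ^ α⁻¹) ^ β :=
                le_trans h2 h3
            _ = ∑ y, (W y z / pY B z) * ((∑ x, c x * pCond A x y ^ α) ^ (β/α)) :=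
                Finset.sum_congr rfl fun y _ => by rw [hg _ (hFA0 y)]
        calc pY B z * ((∑ x, c x * pCond B x z ^ α) ^ (β/α))
            ≤ pY B z * ∑ y, (W y z / pY B z) * ((∑ x, c x * pCond A x y ^ α) ^ (β/α)) :=
              mul_le_mul_of_nonneg_left h4 hz.le
          _ = ∑ y, pY B z * ((W y z / pY B z) * ((∑ x, c x * pCond A x y ^ α) ^ (β/α))) :=
              Finset.mul_sum _ _ _
          _ = ∑ y, W y z * ((∑ x, c x * pCond A x y ^ α) ^ (β/α)) := by
              refine Finset.sum_congr rfl fun y _ => ?_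
              have : pY B z * ((W y z / pY B z) * ((∑ x, c x * pCond A x y ^ α) ^ (β/α)))
                  = (W y z / pY B z * pY B z) * ((∑ x, c x * pCond A x y ^ α) ^ (β/α)) := by
                ring
              rw [this, div_mul_cancel₀ _ hz.ne']
      have hcomp : SB ≤ SA := by
        rw [e1, e2, hSB]
        refine Finset.sum_le_sum fun z _ => ?_
        rcases (hpYB0 z).lt_or_eq with hz | hz
        · rw [if_pos hz]
          exact hstep z hz
        · rw [if_neg (by rw [← hz]; exact lt_irrefl 0)]
          have hWz : ∀ y, W y z = 0 := fun y =>
            le_antisymm ((hWleY y z).trans_eq hz.symm) (hW0 y z)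
          exact le_of_eq (Finset.sum_eq_zero fun y _ => by rw [hWz y, zero_mul]).symm
      have hcoef : 0 ≤ α / (β * (α - 1)) := by
        apply div_nonneg hαpos.le
        apply mul_nonneg (by linarith)
        linarith
      exact mul_le_mul_of_nonneg_left
        (Real.logb_le_logb_of_le one_lt_two hSBpos hcomp) hcoef
end
end
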